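/- arXiv:2304.10774 — 6 statements merged into one kernel-verified Lean document; each statement's English description precedes it below -/
import Mathlib

section
/- Let (H,g) be a real Hilbert space with complexification H_ℂ and real structure α, and let H_ℂ = W⁺ ⊕ W⁻ be an orthogonal decomposition with α(W⁺) = W⁻ (an orthogonal polarization). Define J_W = i(P⁺ - P⁻) where P^± are the orthogonal projections onto W^±, and ω_W(v,w) = g(J_W v, w). Then J_W commutes with α (hence restricts to H), J_W² = -1, ω_W restricts to a real-valued strong symplectic form on H, and (g, J_W, ω_W) is a compatible triple on H. -/
/-!
Put T = P⁺ - P⁻. Complementarity of the projections makes T an involution, orthogonality of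
W⁺ and W⁻ makes it symmetric, and since α swaps W⁺ and W⁻ it anticommutes with T. Hence
J = iT squares to -1, is skew-adjoint and preserves the inner product, and it commutes with α
because α is antilinear: α(iTx) = -iα(Tx) = iT(αx). For α-fixed v and w the vector Jv is
α-fixed as well, so antiunitarity of α makes ⟪w, Jv⟫ real, and skew-adjointness turns this
into the antisymmetry of ω.
-/

open Complex Function
open scoped InnerProductSpace

namespace LinearMap.IsProj

variable {R M : Type*} [Ring R] [AddCommGroup M] [Module R M] {p q : Submodule R M}
  {f g : M →ₗ[R] M}

theorem apply_eq_zero_of_add_eq (hf : IsProj p f) (hfg : ∀ x, f x + g x = x) {x : M}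
    (hx : x ∈ p) : g x = 0 := by
  simpa [hf.map_id x hx] using hfg x

theorem involutive_sub (hf : IsProj p f) (hg : IsProj q g) (hfg : ∀ x, f x + g x = x) :
    Involutive ⇑(f - g) := by
  intro x
  have hgf : g (f x) = 0 := hf.apply_eq_zero_of_add_eq hfg (hf.map_mem x)
  have hfg' : f (g x) = 0 :=
    hg.apply_eq_zero_of_add_eq (fun y => (add_comm _ _).trans (hfg y)) (hg.map_mem x)
  simp only [sub_apply, map_sub, hf.map_id _ (hf.map_mem x), hg.map_id _ (hg.map_mem x), hgf,
    hfg', sub_zero, zero_sub, sub_neg_eq_add, hfg]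

theorem apply_map_eq_map_apply {F : Type*} [FunLike F M M] [AddHomClass F M M] (hf : IsProj p f)
    (hg : IsProj q g) (hfg : ∀ x, f x + g x = x) (σ : F) (hσp : ∀ x ∈ p, σ x ∈ q)
    (hσq : ∀ x ∈ q, σ x ∈ p) (x : M) : g (σ x) = σ (f x) :=
  calc g (σ x) = g (σ (f x)) + g (σ (g x)) := by rw [← map_add, ← map_add, hfg]
    _ = σ (f x) := by
      rw [hg.map_id _ (hσp _ (hf.map_mem x)),
        hf.apply_eq_zero_of_add_eq hfg (hσq _ (hg.map_mem x)), add_zero]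

theorem map_sub_apply {F : Type*} [FunLike F M M] [AddMonoidHomClass F M M] (hf : IsProj p f)
    (hg : IsProj q g) (hfg : ∀ x, f x + g x = x) (σ : F) (hσp : ∀ x ∈ p, σ x ∈ q)
    (hσq : ∀ x ∈ q, σ x ∈ p) (x : M) : σ ((f - g) x) = -(f - g) (σ x) := by
  have hgf : ∀ x, g x + f x = x := fun x => (add_comm _ _).trans (hfg x)
  rw [sub_apply, sub_apply, map_sub, ← hf.apply_map_eq_map_apply hg hfg σ hσp hσq,
    ← hg.apply_map_eq_map_apply hf hgf σ hσq hσp, neg_sub]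

end LinearMap.IsProj

section

variable {𝕜 E : Type*} [RCLike 𝕜] [NormedAddCommGroup E] [InnerProductSpace 𝕜 E]

theorem LinearMap.isSymmetric_of_add_eq_of_inner_eq_zero {f g : E →ₗ[𝕜] E}
    (hfg : ∀ x, f x + g x = x) (horth : ∀ x y, ⟪f x, g y⟫_𝕜 = 0) : f.IsSymmetric := by
  intro x y
  conv_lhs => rw [← hfg y]
  conv_rhs => rw [← hfg x]
  rw [inner_add_right, inner_add_left, horth, ← inner_conj_symm (g x), horth, map_zero]

theorem inner_comm_of_map_eq_self {σ : E → E} (hσ : ∀ x y, ⟪σ x, σ y⟫_𝕜 = ⟪y, x⟫_𝕜) {x y : E}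
    (hx : σ x = x) (hy : σ y = y) : ⟪x, y⟫_𝕜 = ⟪y, x⟫_𝕜 := by
  rw [← hσ, hx, hy]

end

theorem Function.bijective_of_apply_apply_eq_neg {M F : Type*} [AddGroup M] [FunLike F M M]
    [AddMonoidHomClass F M M] (f : F) (hf : ∀ x, f (f x) = -x) : Bijective f :=
  bijective_iff_has_inverse.2 ⟨fun x => -f x, fun x => by simp [hf], fun x => by simp [hf]⟩

namespace LinearMap

variable {E : Type*} [NormedAddCommGroup E] [InnerProductSpace ℂ E] {T : E →ₗ[ℂ] E}

theorem I_smul_apply_I_smul_apply (hT : Involutive T) (x : E) : (I • T) ((I • T) x) = -x := by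
  rw [smul_apply, smul_apply, map_smul, hT x, smul_smul, I_mul_I, neg_one_smul]

theorem IsSymmetric.inner_I_smul_left (hT : T.IsSymmetric) (x y : E) :
    ⟪(I • T) x, y⟫_ℂ = -⟪x, (I • T) y⟫_ℂ := by
  rw [smul_apply, smul_apply, inner_smul_left, inner_smul_right, conj_I, hT, neg_mul]

theorem IsSymmetric.inner_I_smul_apply_I_smul_apply (hT : T.IsSymmetric) (hT' : Involutive T)
    (x y : E) : ⟪(I • T) x, (I • T) y⟫_ℂ = ⟪x, y⟫_ℂ := by
  rw [hT.inner_I_smul_left, I_smul_apply_I_smul_apply hT', inner_neg_right, neg_neg]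

theorem map_I_smul_apply (σ : E →ₗ⋆[ℂ] E) (hσ : ∀ x, σ (T x) = -T (σ x)) (x : E) :
    σ ((I • T) x) = (I • T) (σ x) := by
  rw [smul_apply, smul_apply, map_smulₛₗ, hσ, starRingEnd_apply, star_def, conj_I, neg_smul,
    smul_neg, neg_neg]

end LinearMap

theorem orthogonal_polarization_gives_compatible_triple_general {E : Type*} [NormedAddCommGroup E]
    [InnerProductSpace ℂ E]
    (α : E → E)
    (hα_add : ∀ x y, α (x + y) = α x + α y)
    (hα_smul : ∀ (c : ℂ) (x : E), α (c • x) = (starRingEnd ℂ) c • α x)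
    (hα_invol : ∀ x, α (α x) = x)
    (hα_inner : ∀ x y, (inner ℂ (α x) (α y) : ℂ) = (inner ℂ y x : ℂ))
    (Wp Wm : Submodule ℂ E)
    (horth : ∀ x ∈ Wp, ∀ y ∈ Wm, (inner ℂ x y : ℂ) = 0)
    (hαW : α '' (Wp : Set E) = (Wm : Set E))
    (Pp Pm : E →L[ℂ] E)
    (hPp_mem : ∀ x, Pp x ∈ Wp) (hPm_mem : ∀ x, Pm x ∈ Wm)
    (hsum : ∀ x, Pp x + Pm x = x)
    (hPp_id : ∀ x ∈ Wp, Pp x = x) (hPm_id : ∀ x ∈ Wm, Pm x = x) :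
    ∀ JW : E →L[ℂ] E, JW = Complex.I • (Pp - Pm) →
      (∀ x, JW (α x) = α (JW x)) ∧
      (∀ x, JW (JW x) = -x) ∧
      (∀ v w, α v = v → α w = w → (inner ℂ w (JW v) : ℂ).im = 0) ∧
      (∀ v w, α v = v → α w = w → (inner ℂ w (JW v) : ℂ) = - (inner ℂ v (JW w) : ℂ)) ∧
      (∀ v w, α v = v → α w = w → (inner ℂ w v : ℂ) = (inner ℂ (JW w) (JW v) : ℂ)) ∧
      Function.Bijective (⇑JW) := by
  rintro JW rfl
  let σ : E →ₗ⋆[ℂ] E := { toFun := α, map_add' := hα_add, map_smul' := hα_smul }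
  have hPp : LinearMap.IsProj Wp (Pp : E →ₗ[ℂ] E) := ⟨hPp_mem, hPp_id⟩
  have hPm : LinearMap.IsProj Wm (Pm : E →ₗ[ℂ] E) := ⟨hPm_mem, hPm_id⟩
  have hσWp : ∀ x ∈ Wp, σ x ∈ Wm := fun x hx => hαW.subset ⟨x, hx, rfl⟩
  have hσWm : ∀ x ∈ Wm, σ x ∈ Wp := fun x hx => by
    obtain ⟨y, hy, rfl⟩ := hαW.symm.subset hx
    simpa [σ, hα_invol] using hy
  set T : E →ₗ[ℂ] E := ↑Pp - ↑Pm
  have hT_invol : Involutive T := hPp.involutive_sub hPm hsum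
  have hPp_symm : (Pp : E →ₗ[ℂ] E).IsSymmetric :=
    LinearMap.isSymmetric_of_add_eq_of_inner_eq_zero hsum fun x y =>
      horth _ (hPp_mem x) _ (hPm_mem y)
  have hPm_symm : (Pm : E →ₗ[ℂ] E).IsSymmetric :=
    LinearMap.isSymmetric_of_add_eq_of_inner_eq_zero (fun x => (add_comm _ _).trans (hsum x))
      fun x y => inner_eq_zero_symm.1 (horth _ (hPp_mem y) _ (hPm_mem x))
  have hT_symm : T.IsSymmetric := hPp_symm.sub hPm_symm
  have hσJ : ∀ x, σ ((I • T) x) = (I • T) (σ x) :=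
    LinearMap.map_I_smul_apply σ (hPp.map_sub_apply hPm hsum σ hσWp hσWm)
  have hJ : ⇑(I • (Pp - Pm)) = ⇑(I • T) := rfl
  rw [hJ]
  refine ⟨fun x => (hσJ x).symm, LinearMap.I_smul_apply_I_smul_apply hT_invol, ?_, ?_,
    fun v w _ _ => (hT_symm.inner_I_smul_apply_I_smul_apply hT_invol w v).symm,
    bijective_of_apply_apply_eq_neg _ (LinearMap.I_smul_apply_I_smul_apply hT_invol)⟩
  · intro v w hv hw
    rw [← Complex.conj_eq_iff_im, inner_conj_symm]
    exact inner_comm_of_map_eq_self hα_inner ((hσJ v).trans (congrArg _ hv)) hw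
  · intro v w hv hw
    rw [inner_comm_of_map_eq_self hα_inner hw ((hσJ v).trans (congrArg _ hv)),
      hT_symm.inner_I_smul_left]

/-- An orthogonal polarization E = W⁺ ⊕ W⁻ (orthogonal, α(W⁺) = W⁻) of the complexification of
a real Hilbert space induces J_W = i(P⁺ - P⁻), which commutes with α (hence restricts to H),
squares to -1, and the associated form ω_W(v,w) = g(J_W v, w) restricts to a real-valued
antisymmetric form on H such that (g, J_W, ω_W) is a compatible triple. -/
theorem orthogonal_polarization_gives_compatible_triple {E : Type*} [NormedAddCommGroup E]
    [InnerProductSpace ℂ E] [CompleteSpace E]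
    (α : E → E)
    (hα_add : ∀ x y, α (x + y) = α x + α y)
    (hα_smul : ∀ (c : ℂ) (x : E), α (c • x) = (starRingEnd ℂ) c • α x)
    (hα_invol : ∀ x, α (α x) = x)
    (hα_inner : ∀ x y, (inner ℂ (α x) (α y) : ℂ) = (inner ℂ y x : ℂ))
    (Wp Wm : Submodule ℂ E)
    (hWp_closed : IsClosed (Wp : Set E)) (hWm_closed : IsClosed (Wm : Set E))
    (horth : ∀ x ∈ Wp, ∀ y ∈ Wm, (inner ℂ x y : ℂ) = 0)
    (hcompl : IsCompl Wp Wm)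
    (hαW : α '' (Wp : Set E) = (Wm : Set E))
    (Pp Pm : E →L[ℂ] E)
    (hPp_mem : ∀ x, Pp x ∈ Wp) (hPm_mem : ∀ x, Pm x ∈ Wm)
    (hsum : ∀ x, Pp x + Pm x = x)
    (hPp_id : ∀ x ∈ Wp, Pp x = x) (hPm_id : ∀ x ∈ Wm, Pm x = x) :
    ∀ JW : E →L[ℂ] E, JW = Complex.I • (Pp - Pm) →
      (∀ x, JW (α x) = α (JW x)) ∧
      (∀ x, JW (JW x) = -x) ∧
      (∀ v w, α v = v → α w = w → (inner ℂ w (JW v) : ℂ).im = 0) ∧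
      (∀ v w, α v = v → α w = w → (inner ℂ w (JW v) : ℂ) = - (inner ℂ v (JW w) : ℂ)) ∧
      (∀ v w, α v = v → α w = w → (inner ℂ w v : ℂ) = (inner ℂ (JW w) (JW v) : ℂ)) ∧
      Function.Bijective (⇑JW) :=
  orthogonal_polarization_gives_compatible_triple_general α hα_add hα_smul hα_invol hα_inner Wp Wm
    horth hαW Pp Pm hPp_mem hPm_mem hsum hPp_id hPm_id
end

section
/- Let (H,ω) be a real Hilbert space with strong symplectic form, H_ℂ its complexification with conjugation α, and H_ℂ = W⁺ ⊕ W⁻ a positive symplectic polarization. Define J_W = i(P⁺ - P⁻) with P^± the projections along the decomposition, and g_W(v,w) = ω(v, J_W α w). Then J_W and g_W restrict to H, g_W is a positive definite inner product on H_ℂ making it a Hilbert space, and (g_W, J_W, ω) is a compatible triple on H. -/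
/-!
With `J = i (P⁺ - P⁻)` and `g(v, w) = ω(v, J α w)`, the Lagrangian conditions kill the mixed terms:
`g(v, w) = i (ω(P⁻v, α P⁻w) - ω(P⁺v, α P⁺w))`. Since `α` swaps `W⁺` and `W⁻`, this shows that `g` is
Hermitian and that `g(v, v) = h(P⁺v) + h(α P⁻v)` with `h(u) = -i ω(u, α u)` positive on `W⁺`.
Clearly `g(v, v) ≤ ‖ω‖ ‖J‖ ‖v‖²`. Conversely, Cauchy–Schwarz for `g` bounds the functional
`ω(J α w)` by a multiple of `√g(w, w)`; as `ω` is an isomorphism onto the dual (open mapping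
theorem) and `(J α)² = -1`, this gives `‖w‖² ≲ g(w, w)`.
-/

section

open Complex ComplexConjugate Set

structure IsProjectionPair {M F : Type*} [AddCommGroup M] [FunLike F M M]
    (W₁ W₂ : Set M) (P₁ P₂ : F) : Prop where
  mem₁ : ∀ x, P₁ x ∈ W₁
  mem₂ : ∀ x, P₂ x ∈ W₂
  add_eq : ∀ x, P₁ x + P₂ x = x
  apply₁ : ∀ x ∈ W₁, P₁ x = x
  apply₂ : ∀ x ∈ W₂, P₂ x = x

namespace IsProjectionPair

variable {M F : Type*} [AddCommGroup M] [FunLike F M M] {W₁ W₂ : Set M} {P₁ P₂ : F}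

theorem apply₁_eq_zero (h : IsProjectionPair W₁ W₂ P₁ P₂) {x : M} (hx : x ∈ W₂) :
    P₁ x = 0 := by
  simpa [h.apply₂ x hx] using h.add_eq x

theorem apply₂_eq_zero (h : IsProjectionPair W₁ W₂ P₁ P₂) {x : M} (hx : x ∈ W₁) :
    P₂ x = 0 := by
  simpa [h.apply₁ x hx] using h.add_eq x

theorem eq_zero_of_apply_eq_zero (h : IsProjectionPair W₁ W₂ P₁ P₂) {x : M}
    (h₁ : P₁ x = 0) (h₂ : P₂ x = 0) : x = 0 := by
  rw [← h.add_eq x, h₁, h₂, add_zero]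

theorem apply₁_apply₁ (h : IsProjectionPair W₁ W₂ P₁ P₂) (x : M) : P₁ (P₁ x) = P₁ x :=
  h.apply₁ _ (h.mem₁ x)

theorem apply₂_apply₂ (h : IsProjectionPair W₁ W₂ P₁ P₂) (x : M) : P₂ (P₂ x) = P₂ x :=
  h.apply₂ _ (h.mem₂ x)

theorem apply₁_apply₂ (h : IsProjectionPair W₁ W₂ P₁ P₂) (x : M) : P₁ (P₂ x) = 0 :=
  h.apply₁_eq_zero (h.mem₂ x)

theorem apply₂_apply₁ (h : IsProjectionPair W₁ W₂ P₁ P₂) (x : M) : P₂ (P₁ x) = 0 :=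
  h.apply₂_eq_zero (h.mem₁ x)

variable [AddHomClass F M M] {G : Type*} [FunLike G M M] [AddHomClass G M M] {α : G}

theorem apply₁_map (h : IsProjectionPair W₁ W₂ P₁ P₂) (hα₁ : MapsTo α W₁ W₂)
    (hα₂ : MapsTo α W₂ W₁) (x : M) : P₁ (α x) = α (P₂ x) := by
  conv_lhs => rw [← h.add_eq x]
  rw [map_add, map_add, h.apply₁_eq_zero (hα₁ (h.mem₁ x)), h.apply₁ _ (hα₂ (h.mem₂ x)),
    zero_add]

theorem apply₂_map (h : IsProjectionPair W₁ W₂ P₁ P₂) (hα₁ : MapsTo α W₁ W₂)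
    (hα₂ : MapsTo α W₂ W₁) (x : M) : P₂ (α x) = α (P₁ x) := by
  conv_lhs => rw [← h.add_eq x]
  rw [map_add, map_add, h.apply₂ _ (hα₁ (h.mem₁ x)), h.apply₂_eq_zero (hα₂ (h.mem₂ x)),
    add_zero]

end IsProjectionPair

section ComplexStructure

variable {E : Type*} [NormedAddCommGroup E] [NormedSpace ℂ E]

def complexStructureOfProj (P₁ P₂ : E →L[ℂ] E) : E →L[ℂ] E := I • (P₁ - P₂)

theorem complexStructureOfProj_apply (P₁ P₂ : E →L[ℂ] E) (x : E) :
    complexStructureOfProj P₁ P₂ x = I • (P₁ x - P₂ x) :=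
  rfl

variable {W₁ W₂ : Set E} {P₁ P₂ : E →L[ℂ] E} {ω : E →L[ℂ] E →L[ℂ] ℂ} {α : E →ₗ⋆[ℂ] E}

theorem re_neg_I_mul_apply_map_self_nonneg {W : Set E}
    (hpos : ∀ x ∈ W, x ≠ 0 → 0 < (-I * ω x (α x)).re) {u : E} (hu : u ∈ W) :
    0 ≤ (-I * ω u (α u)).re := by
  rcases eq_or_ne u 0 with rfl | hu0
  · simp
  · exact (hpos u hu hu0).le

namespace IsProjectionPair

theorem complexStructureOfProj_apply_apply (h : IsProjectionPair W₁ W₂ P₁ P₂) (x : E) :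
    complexStructureOfProj P₁ P₂ (complexStructureOfProj P₁ P₂ x) = -x := by
  simp only [complexStructureOfProj_apply, map_smul, map_sub, h.apply₁_apply₁, h.apply₁_apply₂,
    h.apply₂_apply₁, h.apply₂_apply₂, sub_zero, zero_sub, smul_neg, sub_neg_eq_add, ← smul_add,
    h.add_eq, smul_smul, I_mul_I, neg_one_smul]

theorem complexStructureOfProj_map_comm (h : IsProjectionPair W₁ W₂ P₁ P₂)
    (hα₁ : MapsTo α W₁ W₂) (hα₂ : MapsTo α W₂ W₁) (x : E) :
    complexStructureOfProj P₁ P₂ (α x) = α (complexStructureOfProj P₁ P₂ x) := by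
  simp only [complexStructureOfProj_apply, h.apply₁_map hα₁ hα₂, h.apply₂_map hα₁ hα₂,
    map_smulₛₗ, map_sub, conj_I, neg_smul, ← smul_neg, neg_sub]

theorem apply_complexStructureOfProj (h : IsProjectionPair W₁ W₂ P₁ P₂)
    (hω₁ : ∀ x ∈ W₁, ∀ y ∈ W₁, ω x y = 0) (hω₂ : ∀ x ∈ W₂, ∀ y ∈ W₂, ω x y = 0) (v u : E) :
    ω v (complexStructureOfProj P₁ P₂ u) = I * (ω (P₂ v) (P₁ u) - ω (P₁ v) (P₂ u)) := by
  conv_lhs => rw [← h.add_eq v]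
  rw [complexStructureOfProj_apply, map_add, add_apply, map_smul, map_smul,
    map_sub, map_sub, hω₁ _ (h.mem₁ v) _ (h.mem₁ u), hω₂ _ (h.mem₂ v) _ (h.mem₂ u), smul_eq_mul,
    smul_eq_mul]
  ring

theorem apply_complexStructureOfProj_map (h : IsProjectionPair W₁ W₂ P₁ P₂)
    (hα₁ : MapsTo α W₁ W₂) (hα₂ : MapsTo α W₂ W₁) (hω₁ : ∀ x ∈ W₁, ∀ y ∈ W₁, ω x y = 0)
    (hω₂ : ∀ x ∈ W₂, ∀ y ∈ W₂, ω x y = 0) (v w : E) :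
    ω v (complexStructureOfProj P₁ P₂ (α w)) =
      I * (ω (P₂ v) (α (P₂ w)) - ω (P₁ v) (α (P₁ w))) := by
  rw [h.apply_complexStructureOfProj hω₁ hω₂, h.apply₁_map hα₁ hα₂, h.apply₂_map hα₁ hα₂]

theorem apply_complexStructureOfProj_map_eq_conj (h : IsProjectionPair W₁ W₂ P₁ P₂)
    (hα₁ : MapsTo α W₁ W₂) (hα₂ : MapsTo α W₂ W₁) (hα_invol : ∀ x, α (α x) = x)
    (hω₁ : ∀ x ∈ W₁, ∀ y ∈ W₁, ω x y = 0) (hω₂ : ∀ x ∈ W₂, ∀ y ∈ W₂, ω x y = 0)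
    (hω_anti : ∀ x y, ω x y = -ω y x) (hω_real : ∀ x y, ω (α x) (α y) = conj (ω x y))
    (v w : E) :
    ω v (complexStructureOfProj P₁ P₂ (α w)) = conj (ω w (complexStructureOfProj P₁ P₂ (α v))) := by
  rw [h.apply_complexStructureOfProj_map hα₁ hα₂ hω₁ hω₂,
    h.apply_complexStructureOfProj_map hα₁ hα₂ hω₁ hω₂, map_mul, map_sub, conj_I, ← hω_real,
    ← hω_real, hα_invol, hα_invol, hω_anti (α (P₂ w)), hω_anti (α (P₁ w))]
  ring

theorem apply_complexStructureOfProj_map_self (h : IsProjectionPair W₁ W₂ P₁ P₂)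
    (hα₁ : MapsTo α W₁ W₂) (hα₂ : MapsTo α W₂ W₁) (hα_invol : ∀ x, α (α x) = x)
    (hω₁ : ∀ x ∈ W₁, ∀ y ∈ W₁, ω x y = 0) (hω₂ : ∀ x ∈ W₂, ∀ y ∈ W₂, ω x y = 0)
    (hω_anti : ∀ x y, ω x y = -ω y x) (v : E) :
    ω v (complexStructureOfProj P₁ P₂ (α v)) =
      -I * ω (P₁ v) (α (P₁ v)) + -I * ω (α (P₂ v)) (α (α (P₂ v))) := by
  rw [h.apply_complexStructureOfProj_map hα₁ hα₂ hω₁ hω₂, hα_invol, hω_anti (α (P₂ v))]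
  ring

theorem re_apply_complexStructureOfProj_map_self_nonneg (h : IsProjectionPair W₁ W₂ P₁ P₂)
    (hα₁ : MapsTo α W₁ W₂) (hα₂ : MapsTo α W₂ W₁) (hα_invol : ∀ x, α (α x) = x)
    (hω₁ : ∀ x ∈ W₁, ∀ y ∈ W₁, ω x y = 0) (hω₂ : ∀ x ∈ W₂, ∀ y ∈ W₂, ω x y = 0)
    (hω_anti : ∀ x y, ω x y = -ω y x) (hpos : ∀ x ∈ W₁, x ≠ 0 → 0 < (-I * ω x (α x)).re)
    (v : E) : 0 ≤ (ω v (complexStructureOfProj P₁ P₂ (α v))).re := by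
  rw [h.apply_complexStructureOfProj_map_self hα₁ hα₂ hα_invol hω₁ hω₂ hω_anti, add_re]
  exact add_nonneg (re_neg_I_mul_apply_map_self_nonneg hpos (h.mem₁ v))
    (re_neg_I_mul_apply_map_self_nonneg hpos (hα₂ (h.mem₂ v)))

theorem re_apply_complexStructureOfProj_map_self_pos (h : IsProjectionPair W₁ W₂ P₁ P₂)
    (hα₁ : MapsTo α W₁ W₂) (hα₂ : MapsTo α W₂ W₁) (hα_invol : ∀ x, α (α x) = x)
    (hω₁ : ∀ x ∈ W₁, ∀ y ∈ W₁, ω x y = 0) (hω₂ : ∀ x ∈ W₂, ∀ y ∈ W₂, ω x y = 0)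
    (hω_anti : ∀ x y, ω x y = -ω y x) (hpos : ∀ x ∈ W₁, x ≠ 0 → 0 < (-I * ω x (α x)).re)
    {v : E} (hv : v ≠ 0) : 0 < (ω v (complexStructureOfProj P₁ P₂ (α v))).re := by
  rw [h.apply_complexStructureOfProj_map_self hα₁ hα₂ hα_invol hω₁ hω₂ hω_anti, add_re]
  have h₁ := re_neg_I_mul_apply_map_self_nonneg hpos (h.mem₁ v)
  have h₂ := re_neg_I_mul_apply_map_self_nonneg hpos (hα₂ (h.mem₂ v))
  by_cases hv₁ : P₁ v = 0
  · have hv₂ : α (P₂ v) ≠ 0 := fun h₀ ↦ hv <| h.eq_zero_of_apply_eq_zero hv₁ <| by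
      rw [← hα_invol (P₂ v), h₀, map_zero]
    linarith [hpos _ (hα₂ (h.mem₂ v)) hv₂]
  · linarith [hpos _ (h.mem₁ v) hv₁]

end IsProjectionPair

theorem im_apply_map_eq_zero_of_fixed (hω_real : ∀ x y, ω (α x) (α y) = conj (ω x y))
    {J : E →L[ℂ] E} (hJ : ∀ x, J (α x) = α (J x)) {v w : E} (hv : α v = v) (hw : α w = w) :
    (ω v (J (α w))).im = 0 := by
  rw [← conj_eq_iff_im, ← hω_real, ← hJ, hv, hw, hw]

end ComplexStructure

section HermitianForm

variable {E : Type*} [NormedAddCommGroup E] [NormedSpace ℂ E]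

theorem norm_apply_sq_le_re_mul_re (ω : E →L[ℂ] E →L[ℂ] ℂ) (S : E →ₗ⋆[ℂ] E)
    (hherm : ∀ v w, ω v (S w) = conj (ω w (S v))) (hnonneg : ∀ v, 0 ≤ (ω v (S v)).re)
    (v w : E) : ‖ω v (S w)‖ ^ 2 ≤ (ω v (S v)).re * (ω w (S w)).re := by
  -- the library's inner products are conjugate-linear in the first argument
  let g : PreInnerProductSpace.Core ℂ E :=
    { inner x y := ω y (S x)
      conj_inner_symm x y := (hherm y x).symm
      re_inner_nonneg := hnonneg
      add_left x y z := by simp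
      smul_left x y r := by simp }
  have hCS := @InnerProductSpace.Core.inner_mul_inner_self_le ℂ E _ _ _ g w v
  change ‖ω v (S w)‖ * ‖ω w (S v)‖ ≤ (ω w (S w)).re * (ω v (S v)).re at hCS
  rw [hherm w v, RCLike.norm_conj] at hCS
  nlinarith

theorem re_apply_self_le (ω : E →L[ℂ] E →L[ℂ] ℂ) (S : E → E) {M : ℝ}
    (hS : ∀ x, ‖S x‖ ≤ M * ‖x‖) (x : E) : (ω x (S x)).re ≤ ‖ω‖ * M * ‖x‖ ^ 2 :=
  calc (ω x (S x)).re ≤ ‖ω x (S x)‖ := re_le_norm _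
    _ ≤ ‖ω x‖ * ‖S x‖ := (ω x).le_opNorm _
    _ ≤ (‖ω‖ * ‖x‖) * (M * ‖x‖) := by gcongr; exacts [ω.le_opNorm x, hS x]
    _ = ‖ω‖ * M * ‖x‖ ^ 2 := by ring

theorem norm_apply_sq_le_mul_re (ω : E →L[ℂ] E →L[ℂ] ℂ) (S : E →ₗ⋆[ℂ] E) {M : ℝ}
    (hM : 0 ≤ M) (hS : ∀ x, ‖S x‖ ≤ M * ‖x‖) (hω_anti : ∀ x y, ω x y = -ω y x)
    (hherm : ∀ v w, ω v (S w) = conj (ω w (S v))) (hnonneg : ∀ v, 0 ≤ (ω v (S v)).re)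
    (w : E) : ‖ω (S w)‖ ^ 2 ≤ ‖ω‖ * M * (ω w (S w)).re := by
  have hbound : ∀ v, ‖ω (S w) v‖ ≤ √(‖ω‖ * M * (ω w (S w)).re) * ‖v‖ := fun v ↦ by
    rw [hω_anti, norm_neg, ← Real.sqrt_sq (norm_nonneg _), ← Real.sqrt_sq (norm_nonneg v),
      ← Real.sqrt_mul' _ (sq_nonneg _)]
    gcongr
    calc ‖ω v (S w)‖ ^ 2 ≤ (ω v (S v)).re * (ω w (S w)).re :=
          norm_apply_sq_le_re_mul_re ω S hherm hnonneg v w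
      _ ≤ (‖ω‖ * M * ‖v‖ ^ 2) * (ω w (S w)).re := by
          gcongr
          · exact hnonneg w
          · exact re_apply_self_le ω S hS v
      _ = _ := by ring
  calc ‖ω (S w)‖ ^ 2 ≤ √(‖ω‖ * M * (ω w (S w)).re) ^ 2 := by
        gcongr; exact (ω (S w)).opNorm_le_bound (Real.sqrt_nonneg _) hbound
    _ = ‖ω‖ * M * (ω w (S w)).re := Real.sq_sqrt (by have := hnonneg w; positivity)

theorem exists_pos_mul_norm_sq_le_re_apply_self (ω : E →L[ℂ] E →L[ℂ] ℂ) (S : E →ₗ⋆[ℂ] E)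
    {K : NNReal} (hω : AntilipschitzWith K ω) (hω_anti : ∀ x y, ω x y = -ω y x) {M : ℝ}
    (hM : 0 ≤ M) (hS : ∀ x, ‖S x‖ ≤ M * ‖x‖) (hSS : ∀ x, S (S x) = -x)
    (hherm : ∀ v w, ω v (S w) = conj (ω w (S v))) (hnonneg : ∀ v, 0 ≤ (ω v (S v)).re) :
    ∃ c > 0, ∀ x, c * ‖x‖ ^ 2 ≤ (ω x (S x)).re := by
  set A := (M * K) ^ 2 * (‖ω‖ * M)
  have hA : 0 ≤ A := by positivity
  have hlow : ∀ x, ‖x‖ ^ 2 ≤ A * (ω x (S x)).re := fun x ↦ by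
    have hx : ‖x‖ ≤ M * K * ‖ω (S x)‖ :=
      calc ‖x‖ = ‖S (S x)‖ := by rw [hSS, norm_neg]
        _ ≤ M * ‖S x‖ := hS _
        _ ≤ M * (K * ‖ω (S x)‖) := by gcongr; exact ω.bound_of_antilipschitz hω _
        _ = M * K * ‖ω (S x)‖ := by ring
    calc ‖x‖ ^ 2 ≤ (M * K) ^ 2 * ‖ω (S x)‖ ^ 2 := by rw [← mul_pow]; gcongr
      _ ≤ (M * K) ^ 2 * (‖ω‖ * M * (ω x (S x)).re) := by
          gcongr; exact norm_apply_sq_le_mul_re ω S hM hS hω_anti hherm hnonneg x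
      _ = A * (ω x (S x)).re := by ring
  refine ⟨1 / (A + 1), by positivity, fun x ↦ ?_⟩
  rw [div_mul_eq_mul_div, one_mul, div_le_iff₀ (by positivity)]
  nlinarith [hlow x, hnonneg x]

end HermitianForm

end

theorem positive_symplectic_polarization_gives_compatible_triple_general {E : Type*}
    [NormedAddCommGroup E] [InnerProductSpace ℂ E] [CompleteSpace E]
    (α : E → E)
    (hα_add : ∀ x y, α (x + y) = α x + α y)
    (hα_smul : ∀ (c : ℂ) (x : E), α (c • x) = (starRingEnd ℂ) c • α x)
    (hα_invol : ∀ x, α (α x) = x)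
    (hα_norm : ∀ x, ‖α x‖ = ‖x‖)
    (ω : E →L[ℂ] E →L[ℂ] ℂ)
    (hω_anti : ∀ x y, ω x y = - ω y x)
    (hω_real : ∀ x y, ω (α x) (α y) = (starRingEnd ℂ) (ω x y))
    (hω_bij : Function.Bijective (fun x : E => ω x))
    (Wp Wm : Submodule ℂ E)
    (hLagp : ∀ x ∈ Wp, ∀ y ∈ Wp, ω x y = 0)
    (hLagm : ∀ x ∈ Wm, ∀ y ∈ Wm, ω x y = 0)
    (hαW : α '' (Wp : Set E) = (Wm : Set E))
    (hpos : ∀ x ∈ Wp, x ≠ 0 →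
      0 < (- Complex.I * ω x (α x)).re ∧ (- Complex.I * ω x (α x)).im = 0)
    (Pp Pm : E →L[ℂ] E)
    (hPp_mem : ∀ x, Pp x ∈ Wp) (hPm_mem : ∀ x, Pm x ∈ Wm)
    (hsum : ∀ x, Pp x + Pm x = x)
    (hPp_id : ∀ x ∈ Wp, Pp x = x) (hPm_id : ∀ x ∈ Wm, Pm x = x) :
    ∀ JW : E →L[ℂ] E, JW = Complex.I • (Pp - Pm) →
      (∀ x, JW (α x) = α (JW x)) ∧
      (∀ x, JW (JW x) = -x) ∧
      (∀ v w, ω v (JW (α w)) = (starRingEnd ℂ) (ω w (JW (α v)))) ∧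
      (∀ v, v ≠ 0 → 0 < (ω v (JW (α v))).re) ∧
      (∀ v w, α v = v → α w = w → (ω v (JW (α w))).im = 0) ∧
      (∃ c C : ℝ, 0 < c ∧ 0 < C ∧
        ∀ x, c * ‖x‖ ^ 2 ≤ (ω x (JW (α x))).re ∧ (ω x (JW (α x))).re ≤ C * ‖x‖ ^ 2) := by
  rintro JW rfl
  obtain ⟨α, rfl⟩ : ∃ a : E →ₗ⋆[ℂ] E, ⇑a = α := ⟨⟨⟨α, hα_add⟩, hα_smul⟩, rfl⟩
  have hP : IsProjectionPair (Wp : Set E) Wm Pp Pm := ⟨hPp_mem, hPm_mem, hsum, hPp_id, hPm_id⟩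
  have hαp : Set.MapsTo α Wp Wm := hαW ▸ Set.mapsTo_image α Wp
  have hαm : Set.MapsTo α Wm Wp := by
    rw [← hαW, Function.Involutive.image_eq_preimage_symm hα_invol]
    exact fun _ ↦ id
  have hpos_re x hx hx0 := (hpos x hx hx0).1
  have hJα := hP.complexStructureOfProj_map_comm hαp hαm
  have hherm := hP.apply_complexStructureOfProj_map_eq_conj hαp hαm hα_invol hLagp hLagm
    hω_anti hω_real
  have hnonneg := hP.re_apply_complexStructureOfProj_map_self_nonneg hαp hαm hα_invol hLagp
    hLagm hω_anti hpos_re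
  have hJJ := hP.complexStructureOfProj_apply_apply
  set J := complexStructureOfProj Pp Pm
  have hJα_bound x : ‖J (α x)‖ ≤ ‖J‖ * ‖x‖ := hα_norm x ▸ J.le_opNorm (α x)
  have hJαJα x : J (α (J (α x))) = -x := by rw [hJα, hJJ, map_neg, hα_invol]
  obtain ⟨K, hK⟩ := ((ContinuousLinearMap.bijective_iff_dense_range_and_antilipschitz ω).1
    hω_bij).2
  obtain ⟨c, hc, hcoer⟩ := exists_pos_mul_norm_sq_le_re_apply_self ω ((J : E →ₗ[ℂ] E).comp α)
    hK hω_anti (norm_nonneg J) hJα_bound hJαJα hherm hnonneg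
  refine ⟨hJα, hJJ, hherm,
    fun _ ↦ hP.re_apply_complexStructureOfProj_map_self_pos hαp hαm hα_invol hLagp hLagm
      hω_anti hpos_re, fun _ _ ↦ im_apply_map_eq_zero_of_fixed hω_real hJα,
    c, ‖ω‖ * ‖J‖ + 1, hc, by positivity, fun x ↦ ⟨hcoer x, ?_⟩⟩
  calc (ω x (J (α x))).re ≤ ‖ω‖ * ‖J‖ * ‖x‖ ^ 2 := re_apply_self_le ω (J ∘ α) hJα_bound x
    _ ≤ (‖ω‖ * ‖J‖ + 1) * ‖x‖ ^ 2 := by gcongr; linarith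

/-- A positive symplectic polarization E = W⁺ ⊕ W⁻ of the complexification of a real Hilbert
space with strong symplectic form ω induces J_W = i(P⁺ - P⁻) and g_W(v,w) = ω(v, J_W(αw));
J_W commutes with α (hence restricts to H), squares to -1, g_W is Hermitian positive definite
with norm equivalent to the given one (so it makes E a Hilbert space), g_W is real on H, and
(g_W, J_W, ω) is a compatible triple on H. -/
theorem positive_symplectic_polarization_gives_compatible_triple {E : Type*}
    [NormedAddCommGroup E] [InnerProductSpace ℂ E] [CompleteSpace E]
    (α : E → E)
    (hα_add : ∀ x y, α (x + y) = α x + α y)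
    (hα_smul : ∀ (c : ℂ) (x : E), α (c • x) = (starRingEnd ℂ) c • α x)
    (hα_invol : ∀ x, α (α x) = x)
    (hα_norm : ∀ x, ‖α x‖ = ‖x‖)
    (ω : E →L[ℂ] E →L[ℂ] ℂ)
    (hω_anti : ∀ x y, ω x y = - ω y x)
    (hω_real : ∀ x y, ω (α x) (α y) = (starRingEnd ℂ) (ω x y))
    (hω_bij : Function.Bijective (fun x : E => ω x))
    (Wp Wm : Submodule ℂ E)
    (hWp_closed : IsClosed (Wp : Set E)) (hWm_closed : IsClosed (Wm : Set E))
    (hLagp : ∀ x ∈ Wp, ∀ y ∈ Wp, ω x y = 0)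
    (hLagm : ∀ x ∈ Wm, ∀ y ∈ Wm, ω x y = 0)
    (hcompl : IsCompl Wp Wm)
    (hαW : α '' (Wp : Set E) = (Wm : Set E))
    (hpos : ∀ x ∈ Wp, x ≠ 0 →
      0 < (- Complex.I * ω x (α x)).re ∧ (- Complex.I * ω x (α x)).im = 0)
    (Pp Pm : E →L[ℂ] E)
    (hPp_mem : ∀ x, Pp x ∈ Wp) (hPm_mem : ∀ x, Pm x ∈ Wm)
    (hsum : ∀ x, Pp x + Pm x = x)
    (hPp_id : ∀ x ∈ Wp, Pp x = x) (hPm_id : ∀ x ∈ Wm, Pm x = x) :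
    ∀ JW : E →L[ℂ] E, JW = Complex.I • (Pp - Pm) →
      (∀ x, JW (α x) = α (JW x)) ∧
      (∀ x, JW (JW x) = -x) ∧
      (∀ v w, ω v (JW (α w)) = (starRingEnd ℂ) (ω w (JW (α v)))) ∧
      (∀ v, v ≠ 0 → 0 < (ω v (JW (α v))).re) ∧
      (∀ v w, α v = v → α w = w → (ω v (JW (α w))).im = 0) ∧
      (∃ c C : ℝ, 0 < c ∧ 0 < C ∧
        ∀ x, c * ‖x‖ ^ 2 ≤ (ω x (JW (α x))).re ∧ (ω x (JW (α x))).re ≤ C * ‖x‖ ^ 2) :=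
  positive_symplectic_polarization_gives_compatible_triple_general α hα_add hα_smul hα_invol hα_norm
    ω hω_anti hω_real hω_bij Wp Wm hLagp hLagm hαW hpos Pp Pm hPp_mem hPm_mem hsum hPp_id hPm_id
end

section
/- Let H be a real Hilbert space with compatible triple (g,J,ω) and standard polarization H_ℂ = L⁺ ⊕ L⁻. Suppose W⁺ ⊂ H_ℂ is a Lagrangian subspace with H_ℂ = W⁺ ⊕ α(W⁺). Then W⁺ together with W⁻ = α(W⁺) is a positive symplectic polarization if and only if ‖P⁺x‖ > ‖P⁻x‖ for all nonzero x ∈ W⁺, where P^± are the orthogonal projections onto L^±. Moreover, in that case the restriction P⁺|_{W⁺} : W⁺ → L⁺ is a bijection. -/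
/-!
Write x = P⁺x + P⁻x. Since J is skew, its eigenspaces L⁺ and L⁻ are orthogonal, and
-i⟪x, Jx⟫ = ‖P⁺x‖² - ‖P⁻x‖², which is the equivalence. Under positivity ‖x‖ ≤ 2‖P⁺x‖ on W⁺, so
P⁺ is injective on W⁺ with closed range. The range is all of L⁺: if z ∈ L⁺ is orthogonal to P⁺W⁺,
write z = x + αy with x, y ∈ W⁺. Then ⟪z, Jx⟫ = 0, and the Lagrangian condition ⟪αy, Jx⟫ = 0
leaves ⟪x, Jx⟫ = 0, so x = 0 by positivity. Now y = αz lies in L⁻ = α(L⁺), so P⁺y = 0, whence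
y = 0 and z = 0.
-/

open Complex InnerProductSpace
open scoped NNReal

theorem Submodule.eq_of_le_of_orthogonal_inf_eq_bot {𝕜 E : Type*} [RCLike 𝕜]
    [NormedAddCommGroup E] [InnerProductSpace 𝕜 E] {K₁ K₂ : Submodule 𝕜 E}
    [K₁.HasOrthogonalProjection] (h : K₁ ≤ K₂) (h' : K₁ᗮ ⊓ K₂ = ⊥) : K₁ = K₂ := by
  simpa [h'] using sup_orthogonal_inf_of_hasOrthogonalProjection h

theorem Submodule.isClosed_map_of_norm_le_mul {𝕜 E F : Type*} [NontriviallyNormedField 𝕜]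
    [NormedAddCommGroup E] [NormedSpace 𝕜 E] [CompleteSpace E] [NormedAddCommGroup F]
    [NormedSpace 𝕜 F] {W : Submodule 𝕜 E} (hW : IsClosed (W : Set E)) (f : E →L[𝕜] F) {C : ℝ≥0}
    (hC : ∀ x ∈ W, ‖x‖ ≤ C * ‖f x‖) : IsClosed (W.map (f : E →ₗ[𝕜] F) : Set F) := by
  have := hW.completeSpace_coe
  have hf := (f.comp W.subtypeL).antilipschitz_of_bound fun x => hC x x.2
  convert hf.isClosed_range (f.comp W.subtypeL).uniformContinuous
  ext
  simp

section ComplexStructure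

variable {E : Type*} [NormedAddCommGroup E] [InnerProductSpace ℂ E] {J : E →L[ℂ] E}

theorem mem_ker_sub_I_smul_one_iff {x : E} :
    x ∈ LinearMap.ker ((J - I • (1 : E →L[ℂ] E) : E →L[ℂ] E) : E →ₗ[ℂ] E) ↔ J x = I • x := by
  simp [sub_eq_zero]

theorem mem_ker_add_I_smul_one_iff {x : E} :
    x ∈ LinearMap.ker ((J + I • (1 : E →L[ℂ] E) : E →L[ℂ] E) : E →ₗ[ℂ] E) ↔ J x = -(I • x) := by
  simp [add_eq_zero_iff_eq_neg]

theorem inner_eq_zero_of_apply_eq_I_smul_of_apply_eq_neg_I_smul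
    (hJ : ∀ x y, ⟪J x, y⟫_ℂ = -⟪x, J y⟫_ℂ) {u v : E} (hu : J u = I • u) (hv : J v = -(I • v)) :
    ⟪u, v⟫_ℂ = 0 := by
  have h := hJ u v
  rw [hu, hv, inner_smul_left, inner_neg_right, inner_smul_right, conj_I] at h
  have h2 : (2 * I) * ⟪u, v⟫_ℂ = 0 := by linear_combination -h
  simpa [I_ne_zero] using h2

theorem neg_I_mul_inner_add_apply_add (hJ : ∀ x y, ⟪J x, y⟫_ℂ = -⟪x, J y⟫_ℂ) {u v : E}
    (hu : J u = I • u) (hv : J v = -(I • v)) :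
    -I * ⟪u + v, J (u + v)⟫_ℂ = ((‖u‖ ^ 2 - ‖v‖ ^ 2 : ℝ) : ℂ) := by
  have huv := inner_eq_zero_of_apply_eq_I_smul_of_apply_eq_neg_I_smul hJ hu hv
  rw [map_add, hu, hv, inner_add_left, inner_add_right, inner_add_right, inner_neg_right,
    inner_neg_right, inner_smul_right, inner_smul_right, inner_smul_right, inner_smul_right,
    huv, inner_eq_zero_symm.1 huv, inner_self_eq_norm_sq_to_K, inner_self_eq_norm_sq_to_K]
  push_cast
  linear_combination (-(‖u‖ : ℂ) ^ 2 + (‖v‖ : ℂ) ^ 2) * I_sq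

theorem inner_apply_add_eq_zero_of_inner_eq_zero (hJ : ∀ x y, ⟪J x, y⟫_ℂ = -⟪x, J y⟫_ℂ) {u v z : E}
    (hu : J u = I • u) (hv : J v = -(I • v)) (hz : J z = I • z) (hzu : ⟪u, z⟫_ℂ = 0) :
    ⟪z, J (u + v)⟫_ℂ = 0 := by
  rw [map_add, hu, hv, inner_add_right, inner_neg_right, inner_smul_right, inner_smul_right,
    inner_eq_zero_symm.1 hzu, inner_eq_zero_of_apply_eq_I_smul_of_apply_eq_neg_I_smul hJ hz hv]
  simp

theorem apply_conj_eq_neg_I_smul {α : E → E} (hJα : ∀ x, J (α x) = α (J x))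
    (hα_smul : ∀ (c : ℂ) (x : E), α (c • x) = (starRingEnd ℂ) c • α x) {z : E}
    (hz : J z = I • z) : J (α z) = -(I • α z) := by
  rw [hJα, hz, hα_smul, conj_I, neg_smul]

theorem orthogonal_map_inf_ker_sub_I_smul_one_eq_bot {Pp Pm : E →L[ℂ] E} {α : E → E}
    {W : Submodule ℂ E}
    (hJ : ∀ x y, ⟪J x, y⟫_ℂ = -⟪x, J y⟫_ℂ) (hJα : ∀ x, J (α x) = α (J x))
    (hα_smul : ∀ (c : ℂ) (x : E), α (c • x) = (starRingEnd ℂ) c • α x)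
    (hα_invol : ∀ x, α (α x) = x) (hJp : ∀ x, J (Pp x) = I • Pp x)
    (hJm : ∀ x, J (Pm x) = -(I • Pm x)) (hsum : ∀ x, Pp x + Pm x = x)
    (hPm_id : ∀ v, J v = -(I • v) → Pm v = v)
    (hiso : ∀ x ∈ W, ∀ y ∈ W, ⟪α y, J x⟫_ℂ = 0)
    (hdecomp : ∀ z, ∃ x ∈ W, ∃ y ∈ W, z = x + α y)
    (hnondeg : ∀ x ∈ W, ⟪x, J x⟫_ℂ = 0 → x = 0) (hker : ∀ x ∈ W, Pp x = 0 → x = 0) :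
    (W.map (Pp : E →ₗ[ℂ] E))ᗮ ⊓ LinearMap.ker ((J - I • (1 : E →L[ℂ] E) : E →L[ℂ] E) : E →ₗ[ℂ] E)
      = ⊥ := by
  refine (Submodule.eq_bot_iff _).2 fun z ⟨hzR, hzL⟩ => ?_
  rw [SetLike.mem_coe, mem_ker_sub_I_smul_one_iff] at hzL
  obtain ⟨x, hx, y, hy, rfl⟩ := hdecomp z
  have hzx : ⟪x + α y, J x⟫_ℂ = 0 := by
    have hPpx : ⟪Pp x, x + α y⟫_ℂ = 0 :=
      (Submodule.mem_orthogonal _ _).1 hzR _ (Submodule.mem_map_of_mem hx)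
    simpa [hsum] using inner_apply_add_eq_zero_of_inner_eq_zero hJ (hJp x) (hJm x) hzL hPpx
  obtain rfl : x = 0 := hnondeg x hx (by rwa [inner_add_left, hiso x hx y hy, add_zero] at hzx)
  rw [zero_add] at hzL ⊢
  have hy_minus : J y = -(I • y) := by
    simpa [hα_invol] using apply_conj_eq_neg_I_smul hJα hα_smul hzL
  have hPpy : Pp y = 0 := by simpa [hPm_id y hy_minus] using hsum y
  rw [hker y hy hPpy]
  simpa using hα_smul 0 0

end ComplexStructure

theorem positive_polarization_iff_projection_inequality_general {E : Type*} [NormedAddCommGroup E]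
    [InnerProductSpace ℂ E] [CompleteSpace E]
    (α : E → E) (J : E →L[ℂ] E)
    (hα_smul : ∀ (c : ℂ) (x : E), α (c • x) = (starRingEnd ℂ) c • α x)
    (hα_invol : ∀ x, α (α x) = x)
    (hJα : ∀ x, J (α x) = α (J x))
    (hJskew : ∀ x y, (inner ℂ (J x) y : ℂ) = - (inner ℂ x (J y) : ℂ))
    (Pp Pm : E →L[ℂ] E)
    (hPp_mem : ∀ x, Pp x ∈ LinearMap.ker ((J - Complex.I • (1 : E →L[ℂ] E) : E →L[ℂ] E) : E →ₗ[ℂ] E))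
    (hPm_mem : ∀ x, Pm x ∈ LinearMap.ker ((J + Complex.I • (1 : E →L[ℂ] E) : E →L[ℂ] E) : E →ₗ[ℂ] E))
    (hsum : ∀ x, Pp x + Pm x = x)
    (hPm_id : ∀ x ∈ LinearMap.ker ((J + Complex.I • (1 : E →L[ℂ] E) : E →L[ℂ] E) : E →ₗ[ℂ] E), Pm x = x)
    (Wp : Submodule ℂ E) (hWp_closed : IsClosed (Wp : Set E))
    (hiso : ∀ x ∈ Wp, ∀ y ∈ Wp, (inner ℂ (α y) (J x) : ℂ) = 0)
    (hdecomp : ∀ z : E, ∃ x ∈ Wp, ∃ y ∈ Wp, z = x + α y) :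
    ((∀ x ∈ Wp, x ≠ 0 →
        0 < (- Complex.I * (inner ℂ x (J x) : ℂ)).re ∧
          (- Complex.I * (inner ℂ x (J x) : ℂ)).im = 0) ↔
      (∀ x ∈ Wp, x ≠ 0 → ‖Pm x‖ < ‖Pp x‖)) ∧
    ((∀ x ∈ Wp, x ≠ 0 →
        0 < (- Complex.I * (inner ℂ x (J x) : ℂ)).re ∧
          (- Complex.I * (inner ℂ x (J x) : ℂ)).im = 0) →
      Set.BijOn (⇑Pp) (Wp : Set E)
        ((LinearMap.ker ((J - Complex.I • (1 : E →L[ℂ] E) : E →L[ℂ] E) : E →ₗ[ℂ] E) : Submodule ℂ E) : Set E)) := by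
  have hJp x : J (Pp x) = I • Pp x := mem_ker_sub_I_smul_one_iff.1 (hPp_mem x)
  have hJm x : J (Pm x) = -(I • Pm x) := mem_ker_add_I_smul_one_iff.1 (hPm_mem x)
  have hform x : -I * ⟪x, J x⟫_ℂ = ((‖Pp x‖ ^ 2 - ‖Pm x‖ ^ 2 : ℝ) : ℂ) := by
    simpa [hsum] using neg_I_mul_inner_add_apply_add hJskew (hJp x) (hJm x)
  have hiff : (∀ x ∈ Wp, x ≠ 0 → 0 < (-I * ⟪x, J x⟫_ℂ).re ∧ (-I * ⟪x, J x⟫_ℂ).im = 0) ↔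
      ∀ x ∈ Wp, x ≠ 0 → ‖Pm x‖ < ‖Pp x‖ := by
    refine forall₂_congr fun x _ => imp_congr_right fun _ => ?_
    rw [hform, ofReal_re, ofReal_im, sub_pos, sq_lt_sq₀ (norm_nonneg _) (norm_nonneg _)]
    simp
  refine ⟨hiff, fun hpos => ?_⟩
  have hbound : ∀ x ∈ Wp, ‖x‖ ≤ (2 : ℝ≥0) * ‖Pp x‖ := by
    intro x hx
    obtain rfl | hne := eq_or_ne x 0
    · simp
    calc ‖x‖ = ‖Pp x + Pm x‖ := by rw [hsum]
      _ ≤ ‖Pp x‖ + ‖Pm x‖ := norm_add_le _ _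
      _ ≤ (2 : ℝ≥0) * ‖Pp x‖ := by push_cast; linarith [hiff.1 hpos x hx hne]
  have hker : ∀ x ∈ Wp, Pp x = 0 → x = 0 := fun x hx h0 =>
    norm_le_zero_iff.1 (by simpa [h0] using hbound x hx)
  have hnondeg : ∀ x ∈ Wp, ⟪x, J x⟫_ℂ = 0 → x = 0 := fun x hx h0 =>
    by_contra fun hne => by simpa [h0] using (hpos x hx hne).1
  have : (Wp.map (Pp : E →ₗ[ℂ] E)).HasOrthogonalProjection :=
    have := (Submodule.isClosed_map_of_norm_le_mul hWp_closed Pp hbound).completeSpace_coe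
    inferInstance
  have hrange := Submodule.eq_of_le_of_orthogonal_inf_eq_bot
    (by rintro _ ⟨x, -, rfl⟩; exact hPp_mem x)
    (orthogonal_map_inf_ker_sub_I_smul_one_eq_bot hJskew hJα hα_smul hα_invol hJp hJm hsum
      (fun v hv => hPm_id v (mem_ker_add_I_smul_one_iff.2 hv)) hiso hdecomp hnondeg hker)
  refine ⟨fun x _ => hPp_mem x, fun x hx y hy h => ?_, ?_⟩
  · exact sub_eq_zero.1 (hker _ (Wp.sub_mem hx hy) (by rw [map_sub, h, sub_self]))
  · rw [← hrange, Submodule.map_coe]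
    exact Set.surjOn_image _ _

/-- Let W⁺ be a Lagrangian subspace of the complexification with E = W⁺ ⊕ α(W⁺). Then W⁺ is a
positive symplectic polarization iff ‖P⁺x‖ > ‖P⁻x‖ for all nonzero x ∈ W⁺ (P^± the orthogonal
projections onto L^± = ker(J ∓ i)); and in that case P⁺ restricts to a bijection W⁺ → L⁺.
Here ω(x,y) = g(Jx, αy) is the bilinear extension of the symplectic form, so that
-i·ω(x, αx) = -i⟪x, Jx⟫. -/
theorem positive_polarization_iff_projection_inequality {E : Type*} [NormedAddCommGroup E]
    [InnerProductSpace ℂ E] [CompleteSpace E]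
    (α : E → E) (J : E →L[ℂ] E)
    (hα_add : ∀ x y, α (x + y) = α x + α y)
    (hα_smul : ∀ (c : ℂ) (x : E), α (c • x) = (starRingEnd ℂ) c • α x)
    (hα_invol : ∀ x, α (α x) = x)
    (hα_inner : ∀ x y, (inner ℂ (α x) (α y) : ℂ) = (inner ℂ y x : ℂ))
    (hJJ : ∀ x, J (J x) = -x)
    (hJα : ∀ x, J (α x) = α (J x))
    (hJskew : ∀ x y, (inner ℂ (J x) y : ℂ) = - (inner ℂ x (J y) : ℂ))
    (Pp Pm : E →L[ℂ] E)
    (hPp_mem : ∀ x, Pp x ∈ LinearMap.ker ((J - Complex.I • (1 : E →L[ℂ] E) : E →L[ℂ] E) : E →ₗ[ℂ] E))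
    (hPm_mem : ∀ x, Pm x ∈ LinearMap.ker ((J + Complex.I • (1 : E →L[ℂ] E) : E →L[ℂ] E) : E →ₗ[ℂ] E))
    (hsum : ∀ x, Pp x + Pm x = x)
    (hPp_id : ∀ x ∈ LinearMap.ker ((J - Complex.I • (1 : E →L[ℂ] E) : E →L[ℂ] E) : E →ₗ[ℂ] E), Pp x = x)
    (hPm_id : ∀ x ∈ LinearMap.ker ((J + Complex.I • (1 : E →L[ℂ] E) : E →L[ℂ] E) : E →ₗ[ℂ] E), Pm x = x)
    (Wp : Submodule ℂ E) (hWp_closed : IsClosed (Wp : Set E))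
    (hiso : ∀ x ∈ Wp, ∀ y ∈ Wp, (inner ℂ (α y) (J x) : ℂ) = 0)
    (hdecomp : ∀ z : E, ∃ x ∈ Wp, ∃ y ∈ Wp, z = x + α y)
    (hdisj : ∀ x ∈ Wp, ∀ y ∈ Wp, x + α y = 0 → x = 0) :
    ((∀ x ∈ Wp, x ≠ 0 →
        0 < (- Complex.I * (inner ℂ x (J x) : ℂ)).re ∧
          (- Complex.I * (inner ℂ x (J x) : ℂ)).im = 0) ↔
      (∀ x ∈ Wp, x ≠ 0 → ‖Pm x‖ < ‖Pp x‖)) ∧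
    ((∀ x ∈ Wp, x ≠ 0 →
        0 < (- Complex.I * (inner ℂ x (J x) : ℂ)).re ∧
          (- Complex.I * (inner ℂ x (J x) : ℂ)).im = 0) →
      Set.BijOn (⇑Pp) (Wp : Set E)
        ((LinearMap.ker ((J - Complex.I • (1 : E →L[ℂ] E) : E →L[ℂ] E) : E →ₗ[ℂ] E) : Submodule ℂ E) : Set E)) :=
  positive_polarization_iff_projection_inequality_general α J hα_smul hα_invol hJα hJskew Pp Pm
    hPp_mem hPm_mem hsum hPm_id Wp hWp_closed hiso hdecomp
end

section
/- Let H be a real Hilbert space with compatible triple (g,J,ω), L^± = ker(J ∓ i) ⊂ H_ℂ, and Z : L⁺ → L⁻ a bounded operator. Then the graph of Z is a Lagrangian subspace of (H_ℂ, ω) if and only if Z = α Z* α, where Z* is the adjoint and α the conjugation. -/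
/-!
Write β(x, y) = ⟪α x, y⟫, a symmetric complex-bilinear form, so that ω(y₁, y₂) = ⟪α y₂, J y₁⟫.
Skewness of J makes L⁺ ⟂ L⁻, and α swaps L⁺ and L⁻; hence L⁺ and L⁻ are ω-isotropic and
ω(x + Z x, y + Z y) = i (β(x, Z y) - β(y, Z x)) for x, y ∈ L⁺. So the graph is isotropic iff Z is
β-symmetric on L⁺, which, as Z kills L⁻ and E = L⁺ ⊕ L⁻, says Z = α Z* α on L⁺. For maximality, if
z = a + b with a ∈ L⁺, b ∈ L⁻ is ω-orthogonal to the graph, symmetry gives β(x, Z a - b) = 0 for all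
x ∈ L⁺, and x = α (Z a - b) forces b = Z a.
-/

open Complex ContinuousLinearMap
open scoped InnerProductSpace

namespace ComplexStructure

variable {E : Type*} [NormedAddCommGroup E] [InnerProductSpace ℂ E] {J : E →L[ℂ] E}

local notation "L⁺" => LinearMap.ker ((J - Complex.I • (1 : E →L[ℂ] E) : E →ₗ[ℂ] E))
local notation "L⁻" => LinearMap.ker ((J + Complex.I • (1 : E →L[ℂ] E) : E →ₗ[ℂ] E))

theorem mem_ker_sub_I_smul_iff {x : E} : x ∈ L⁺ ↔ J x = I • x := by
  simp [sub_eq_zero]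

theorem mem_ker_add_I_smul_iff {x : E} : x ∈ L⁻ ↔ J x = -(I • x) := by
  simp [add_eq_zero_iff_eq_neg]

theorem isOrtho_ker_sub_ker_add (hJskew : ∀ x y, ⟪J x, y⟫_ℂ = -⟪x, J y⟫_ℂ) : L⁺ ⟂ L⁻ := by
  refine Submodule.isOrtho_iff_inner_eq.mpr fun x hx y hy => ?_
  have h := hJskew x y
  rw [mem_ker_sub_I_smul_iff.mp hx, mem_ker_add_I_smul_iff.mp hy, inner_smul_left,
    inner_neg_right, inner_smul_right, conj_I, neg_neg] at h
  have h2 : (2 * I) * ⟪x, y⟫_ℂ = 0 := by linear_combination -h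
  exact (mul_eq_zero.mp h2).resolve_left (by simp)

theorem ker_sub_sup_ker_add (hJJ : ∀ x, J (J x) = -x) : L⁺ ⊔ L⁻ = ⊤ := by
  refine Submodule.eq_top_iff'.mpr fun z => Submodule.mem_sup.mpr
    ⟨(2⁻¹ : ℂ) • (z - I • J z), ?_, (2⁻¹ : ℂ) • (z + I • J z), ?_, ?_⟩
  · rw [mem_ker_sub_I_smul_iff, map_smul, map_sub, map_smul, hJJ]
    match_scalars <;> simp [Complex.ext_iff]
  · rw [mem_ker_add_I_smul_iff, map_smul, map_add, map_smul, hJJ]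
    match_scalars <;> simp [Complex.ext_iff]
  · match_scalars <;> ring

variable {α : E →ₗ⋆[ℂ] E}

theorem map_mem_ker_add_of_mem_ker_sub (hJα : ∀ x, J (α x) = α (J x)) {x : E} (hx : x ∈ L⁺) :
    α x ∈ L⁻ := by
  rw [mem_ker_add_I_smul_iff, hJα, mem_ker_sub_I_smul_iff.mp hx, map_smulₛₗ, conj_I, neg_smul]

theorem map_mem_ker_sub_of_mem_ker_add (hJα : ∀ x, J (α x) = α (J x)) {x : E} (hx : x ∈ L⁻) :
    α x ∈ L⁺ := by
  rw [mem_ker_sub_I_smul_iff, hJα, mem_ker_add_I_smul_iff.mp hx, ← neg_smul, map_smulₛₗ,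
    map_neg, conj_I, neg_neg]

theorem inner_map_comm (hα_invol : ∀ x, α (α x) = x)
    (hα_inner : ∀ x y, ⟪α x, α y⟫_ℂ = ⟪y, x⟫_ℂ) (x y : E) : ⟪α x, y⟫_ℂ = ⟪α y, x⟫_ℂ := by
  rw [← hα_inner, hα_invol]

theorem inner_map_add_J_add (hJskew : ∀ x y, ⟪J x, y⟫_ℂ = -⟪x, J y⟫_ℂ)
    (hJα : ∀ x, J (α x) = α (J x)) {u a v b : E} (hu : u ∈ L⁺) (ha : a ∈ L⁺) (hv : v ∈ L⁻)
    (hb : b ∈ L⁻) :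
    ⟪α (a + b), J (u + v)⟫_ℂ = I * ⟪α b, u⟫_ℂ - I * ⟪α a, v⟫_ℂ := by
  have hortho := isOrtho_ker_sub_ker_add hJskew
  simp only [map_add, mem_ker_sub_I_smul_iff.mp hu, mem_ker_add_I_smul_iff.mp hv,
    inner_add_left, inner_add_right, inner_neg_right, inner_smul_right]
  rw [hortho.inner_eq (map_mem_ker_sub_of_mem_ker_add hJα hb) hv,
    hortho.symm.inner_eq (map_mem_ker_add_of_mem_ker_sub hJα ha) hu]
  ring

theorem eq_map_adjoint_map_iff [CompleteSpace E] (hα_invol : ∀ x, α (α x) = x)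
    (hα_inner : ∀ x y, ⟪α x, α y⟫_ℂ = ⟪y, x⟫_ℂ) (Z : E →L[ℂ] E) (x : E) :
    Z x = α (adjoint Z (α x)) ↔ ∀ y, ⟪α y, Z x⟫_ℂ = ⟪α x, Z y⟫_ℂ := by
  constructor
  · intro h y
    rw [h, hα_inner, adjoint_inner_left]
  · intro h
    refine ext_inner_left ℂ fun w => ?_
    rw [← hα_invol w, h, hα_inner, adjoint_inner_left]

def graphOn (L : Submodule ℂ E) (Z : E →L[ℂ] E) : Set E := {y | ∃ x ∈ L, y = x + Z x}

variable {Z : E →L[ℂ] E}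

theorem symmetric_iff_forall_symmetric (hJJ : ∀ x, J (J x) = -x)
    (hJskew : ∀ x y, ⟪J x, y⟫_ℂ = -⟪x, J y⟫_ℂ) (hJα : ∀ x, J (α x) = α (J x))
    (hZmem : ∀ x ∈ L⁺, Z x ∈ L⁻) (hZzero : ∀ x ∈ L⁻, Z x = 0) :
    (∀ x ∈ L⁺, ∀ y ∈ L⁺, ⟪α y, Z x⟫_ℂ = ⟪α x, Z y⟫_ℂ) ↔
      ∀ x ∈ L⁺, ∀ y, ⟪α y, Z x⟫_ℂ = ⟪α x, Z y⟫_ℂ := by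
  refine ⟨fun hsymm x hx y => ?_, fun h x hx y _ => h x hx y⟩
  obtain ⟨a, ha, b, hb, rfl⟩ :=
    Submodule.mem_sup.mp (ker_sub_sup_ker_add hJJ ▸ Submodule.mem_top (x := y))
  rw [map_add, map_add, inner_add_left, inner_add_right, hZzero b hb, inner_zero_right,
    (isOrtho_ker_sub_ker_add hJskew).inner_eq (map_mem_ker_sub_of_mem_ker_add hJα hb)
      (hZmem x hx), add_zero, add_zero, hsymm x hx a ha]

local notation "Γ" => graphOn L⁺ Z

theorem inner_map_graph_J_graph (hα_invol : ∀ x, α (α x) = x)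
    (hα_inner : ∀ x y, ⟪α x, α y⟫_ℂ = ⟪y, x⟫_ℂ) (hJskew : ∀ x y, ⟪J x, y⟫_ℂ = -⟪x, J y⟫_ℂ)
    (hJα : ∀ x, J (α x) = α (J x)) (hZmem : ∀ x ∈ L⁺, Z x ∈ L⁻) {x y : E} (hx : x ∈ L⁺)
    (hy : y ∈ L⁺) :
    ⟪α (y + Z y), J (x + Z x)⟫_ℂ = I * (⟪α x, Z y⟫_ℂ - ⟪α y, Z x⟫_ℂ) := by
  rw [inner_map_add_J_add hJskew hJα hx hy (hZmem x hx) (hZmem y hy),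
    inner_map_comm hα_invol hα_inner (Z y)]
  ring

theorem graph_isotropic_iff_symmetric (hα_invol : ∀ x, α (α x) = x)
    (hα_inner : ∀ x y, ⟪α x, α y⟫_ℂ = ⟪y, x⟫_ℂ) (hJskew : ∀ x y, ⟪J x, y⟫_ℂ = -⟪x, J y⟫_ℂ)
    (hJα : ∀ x, J (α x) = α (J x)) (hZmem : ∀ x ∈ L⁺, Z x ∈ L⁻) :
    (∀ y₁ ∈ Γ, ∀ y₂ ∈ Γ, ⟪α y₂, J y₁⟫_ℂ = 0) ↔
      ∀ x ∈ L⁺, ∀ y ∈ L⁺, ⟪α y, Z x⟫_ℂ = ⟪α x, Z y⟫_ℂ := by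
  constructor
  · intro hiso x hx y hy
    have h := hiso _ ⟨x, hx, rfl⟩ _ ⟨y, hy, rfl⟩
    rw [inner_map_graph_J_graph hα_invol hα_inner hJskew hJα hZmem hx hy, mul_eq_zero,
      sub_eq_zero] at h
    exact (h.resolve_left I_ne_zero).symm
  · rintro hsymm _ ⟨x, hx, rfl⟩ _ ⟨y, hy, rfl⟩
    rw [inner_map_graph_J_graph hα_invol hα_inner hJskew hJα hZmem hx hy, hsymm x hx y hy,
      sub_self, mul_zero]

theorem mem_graph_of_forall_inner_eq_zero (hα_invol : ∀ x, α (α x) = x)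
    (hα_inner : ∀ x y, ⟪α x, α y⟫_ℂ = ⟪y, x⟫_ℂ) (hJJ : ∀ x, J (J x) = -x)
    (hJskew : ∀ x y, ⟪J x, y⟫_ℂ = -⟪x, J y⟫_ℂ) (hJα : ∀ x, J (α x) = α (J x))
    (hZmem : ∀ x ∈ L⁺, Z x ∈ L⁻) (hsymm : ∀ x ∈ L⁺, ∀ y ∈ L⁺, ⟪α y, Z x⟫_ℂ = ⟪α x, Z y⟫_ℂ)
    {z : E} (hz : ∀ w ∈ Γ, ⟪α w, J z⟫_ℂ = 0) : z ∈ Γ := by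
  obtain ⟨a, ha, b, hb, rfl⟩ :=
    Submodule.mem_sup.mp (ker_sub_sup_ker_add hJJ ▸ Submodule.mem_top (x := z))
  have hperp : ∀ x ∈ L⁺, ⟪α x, Z a - b⟫_ℂ = 0 := by
    intro x hx
    have h := hz _ ⟨x, hx, rfl⟩
    rw [inner_map_add_J_add hJskew hJα ha hx hb (hZmem x hx),
      inner_map_comm hα_invol hα_inner (Z x), hsymm x hx a ha, ← mul_sub,
      ← inner_sub_right] at h
    exact (mul_eq_zero.mp h).resolve_left I_ne_zero
  have h := hperp _ (map_mem_ker_sub_of_mem_ker_add hJα (sub_mem (hZmem a ha) hb))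
  rw [hα_invol, inner_self_eq_zero, sub_eq_zero] at h
  exact ⟨a, ha, by rw [h]⟩

end ComplexStructure

open ComplexStructure in
/-- For a bounded operator Z : L⁺ → L⁻ (extended by zero to E), the graph of Z is a Lagrangian
subspace of the complexification (with ω(x,y) = g(Jx, αy)) iff Z = αZ*α. -/
theorem graph_lagrangian_iff_symmetric {E : Type*} [NormedAddCommGroup E]
    [InnerProductSpace ℂ E] [CompleteSpace E]
    (α : E → E) (J : E →L[ℂ] E)
    (hα_add : ∀ x y, α (x + y) = α x + α y)
    (hα_smul : ∀ (c : ℂ) (x : E), α (c • x) = (starRingEnd ℂ) c • α x)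
    (hα_invol : ∀ x, α (α x) = x)
    (hα_inner : ∀ x y, (inner ℂ (α x) (α y) : ℂ) = (inner ℂ y x : ℂ))
    (hJJ : ∀ x, J (J x) = -x)
    (hJα : ∀ x, J (α x) = α (J x))
    (hJskew : ∀ x y, (inner ℂ (J x) y : ℂ) = - (inner ℂ x (J y) : ℂ))
    (Z : E →L[ℂ] E)
    (hZmem : ∀ x ∈ LinearMap.ker ((J - Complex.I • (1 : E →L[ℂ] E) : E →ₗ[ℂ] E)),
      Z x ∈ LinearMap.ker ((J + Complex.I • (1 : E →L[ℂ] E) : E →ₗ[ℂ] E)))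
    (hZzero : ∀ x ∈ LinearMap.ker ((J + Complex.I • (1 : E →L[ℂ] E) : E →ₗ[ℂ] E)), Z x = 0) :
    ((∀ y₁ ∈ {y : E | ∃ x ∈ LinearMap.ker ((J - Complex.I • (1 : E →L[ℂ] E) : E →ₗ[ℂ] E)), y = x + Z x},
        ∀ y₂ ∈ {y : E | ∃ x ∈ LinearMap.ker ((J - Complex.I • (1 : E →L[ℂ] E) : E →ₗ[ℂ] E)), y = x + Z x},
          (inner ℂ (α y₂) (J y₁) : ℂ) = 0) ∧
      (∀ z : E,
        (∀ w ∈ {y : E | ∃ x ∈ LinearMap.ker ((J - Complex.I • (1 : E →L[ℂ] E) : E →ₗ[ℂ] E)), y = x + Z x},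
          (inner ℂ (α w) (J z) : ℂ) = 0) →
        z ∈ {y : E | ∃ x ∈ LinearMap.ker ((J - Complex.I • (1 : E →L[ℂ] E) : E →ₗ[ℂ] E)), y = x + Z x}))
    ↔ (∀ x ∈ LinearMap.ker ((J - Complex.I • (1 : E →L[ℂ] E) : E →ₗ[ℂ] E)),
        Z x = α (ContinuousLinearMap.adjoint Z (α x))) := by
  let σ : E →ₗ⋆[ℂ] E := { toFun := α, map_add' := hα_add, map_smul' := hα_smul }
  have hsymm_iff_adjoint := (symmetric_iff_forall_symmetric (α := σ) hJJ hJskew hJα hZmem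
    hZzero).trans (forall₂_congr fun x _ => (eq_map_adjoint_map_iff hα_invol hα_inner Z x).symm)
  have hiso_iff_symm := graph_isotropic_iff_symmetric (α := σ) hα_invol hα_inner hJskew hJα hZmem
  constructor
  · rintro ⟨hiso, -⟩
    exact hsymm_iff_adjoint.mp (hiso_iff_symm.mp hiso)
  · intro hadj
    have hsymm := hsymm_iff_adjoint.mpr hadj
    exact ⟨hiso_iff_symm.mpr hsymm, fun z => mem_graph_of_forall_inner_eq_zero (α := σ) hα_invol
      hα_inner hJJ hJskew hJα hZmem hsymm⟩
end

section
/- Let u be a bounded symplectomorphism of H_ℂ = L⁺ ⊕ L⁻ written in block form u = [[a, αbα],[b, αaα]]. Then the block a : L⁺ → L⁺ is invertible, and u⁻¹ = [[a*, -b*],[-αb*α, αa*α]]. -/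
/-!
Since `u` commutes with `α`, preservation of `ω` says `⟪u x, J (u y)⟫ = ⟪x, J y⟫`, i.e.
`u† J u = J`, so `u⁻¹ = -J u† J`. Writing `u = T + αTα` with `T = a + b` gives
`u† = T† + αT†α`, and reading off the blocks of `u†` on `L⁺ = ker (J - i)` and
`L⁻ = ker (J + i)` gives the formula for `u⁻¹`.

On `v = p + m ∈ L⁺ ⊕ L⁻` the form `-i ⟪v, J v⟫` equals `‖p‖² - ‖m‖²`. For `x ∈ L⁺` the
symplectic identity applied to `u x` gives `‖a x‖² = ‖x‖² + ‖b x‖²`, and applied to `u⁻¹ x` it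
gives `‖a† x‖ ≥ ‖x‖`. So `a` is bounded below on the closed subspace `L⁺` and `a†` is injective
there, hence `a` maps `L⁺` onto itself.
-/

open ContinuousLinearMap Set Complex

local notation "⟪" x ", " y "⟫" => inner ℂ x y

section Hilbert

variable {𝕜 E : Type*} [RCLike 𝕜] [NormedAddCommGroup E] [InnerProductSpace 𝕜 E]
  [CompleteSpace E] {T : E →L[𝕜] E}

theorem adjoint_apply_mem_orthogonal {V : Submodule 𝕜 E} (hT : ∀ v ∈ V, T v = 0) (z : E) :
    adjoint T z ∈ Vᗮ := fun v hv => by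
  rw [adjoint_inner_right, hT v hv, inner_zero_left]

theorem adjoint_apply_eq_zero_of_mem_orthogonal {V : Submodule 𝕜 E} (hT : ∀ x, T x ∈ V)
    {z : E} (hz : z ∈ Vᗮ) : adjoint T z = 0 :=
  ext_inner_right 𝕜 fun x => by
    rw [adjoint_inner_left, inner_zero_left, Submodule.inner_left_of_mem_orthogonal (hT x) hz]

theorem bijOn_of_norm_le_mul {K : Submodule 𝕜 E} [CompleteSpace K] (C : NNReal)
    (hT : MapsTo T K K) (hT' : MapsTo (adjoint T) K K) (hbelow : ∀ x ∈ K, ‖x‖ ≤ C * ‖T x‖)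
    (hadj_inj : ∀ y ∈ K, adjoint T y = 0 → y = 0) : BijOn T K K := by
  have hinj : InjOn T K := fun x hx y hy hxy => by
    have := hbelow (x - y) (K.sub_mem hx hy)
    rw [map_sub, hxy, sub_self, norm_zero, mul_zero, norm_le_zero_iff] at this
    exact sub_eq_zero.1 this
  refine ⟨hT, hinj, ?_⟩
  set f : K →L[𝕜] E := T.comp K.subtypeL
  set S : Submodule 𝕜 E := LinearMap.range (f : K →ₗ[𝕜] E)
  have hS : CompleteSpace S := by
    have hf := f.antilipschitz_of_bound fun x => hbelow x x.2
    exact IsComplete.completeSpace_coe (s := (S : Set E))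
      (hf.isComplete_range f.uniformContinuous)
  have hSK : S ≤ K := by rintro _ ⟨x, rfl⟩; exact hT x.2
  have hSorth : Sᗮ ⊓ K = ⊥ := by
    refine (Submodule.eq_bot_iff _).2 fun y hy => ?_
    obtain ⟨hyS, hyK⟩ := Submodule.mem_inf.1 hy
    refine hadj_inj y hyK ?_
    have h := Submodule.inner_right_of_mem_orthogonal
      (LinearMap.mem_range_self (f : K →ₗ[𝕜] E) ⟨adjoint T y, hT' hyK⟩) hyS
    change inner 𝕜 (T (adjoint T y)) y = 0 at h
    rwa [← adjoint_inner_right, inner_self_eq_zero] at h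
  have hSeq : S = K := by
    simpa [hSorth] using Submodule.sup_orthogonal_inf_of_hasOrthogonalProjection hSK
  intro y hy
  obtain ⟨x, rfl⟩ : y ∈ S := hSeq ▸ hy
  exact ⟨x, x.2, rfl⟩

end Hilbert

section ComplexStructure

variable {E : Type*} [NormedAddCommGroup E] [InnerProductSpace ℂ E] {J T : E →L[ℂ] E}

variable (J) in
def plusEigenspace : Submodule ℂ E :=
  LinearMap.ker (((J - I • (1 : E →L[ℂ] E) : E →L[ℂ] E) : E →ₗ[ℂ] E))

variable (J) in
def minusEigenspace : Submodule ℂ E :=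
  LinearMap.ker (((J + I • (1 : E →L[ℂ] E) : E →L[ℂ] E) : E →ₗ[ℂ] E))

theorem mem_plusEigenspace {x : E} : x ∈ plusEigenspace J ↔ J x = I • x := by
  simp [plusEigenspace, sub_eq_zero]

theorem mem_minusEigenspace {x : E} : x ∈ minusEigenspace J ↔ J x = -(I • x) := by
  simp [minusEigenspace, add_eq_zero_iff_eq_neg]

theorem isClosed_plusEigenspace : IsClosed (plusEigenspace J : Set E) :=
  (J - I • (1 : E →L[ℂ] E)).isClosed_ker

theorem exists_plus_add_minus (hJJ : ∀ x, J (J x) = -x) (w : E) :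
    ∃ p ∈ plusEigenspace J, ∃ m ∈ minusEigenspace J, p + m = w := by
  have hII : ∀ v : E, I • I • v = -v := fun v => by rw [smul_smul, I_mul_I, neg_one_smul]
  refine ⟨(1 / 2 : ℂ) • (w - I • J w), ?_, (1 / 2 : ℂ) • (w + I • J w), ?_, ?_⟩
  · rw [mem_plusEigenspace]
    simp only [map_smul, map_sub, hJJ, smul_neg, smul_sub, smul_comm I (1 / 2 : ℂ), hII]
    module
  · rw [mem_minusEigenspace]
    simp only [map_smul, map_add, hJJ, smul_neg, smul_add, smul_comm I (1 / 2 : ℂ), hII]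
    module
  · module

theorem inner_eq_zero_of_mem_plus_of_mem_minus (hskew : ∀ x y, ⟪J x, y⟫ = -⟪x, J y⟫)
    {p m : E} (hp : p ∈ plusEigenspace J) (hm : m ∈ minusEigenspace J) : ⟪p, m⟫ = 0 := by
  have h := hskew p m
  rw [mem_plusEigenspace.1 hp, mem_minusEigenspace.1 hm, inner_smul_left, inner_neg_right,
    inner_smul_right, conj_I] at h
  have h2 : (2 * I) * ⟪p, m⟫ = 0 := by linear_combination -h
  exact (mul_eq_zero.1 h2).resolve_left (by simp)

theorem orthogonal_plusEigenspace (hJJ : ∀ x, J (J x) = -x)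
    (hskew : ∀ x y, ⟪J x, y⟫ = -⟪x, J y⟫) : (plusEigenspace J)ᗮ = minusEigenspace J := by
  refine le_antisymm (fun v hv => ?_) fun m hm p hp =>
    inner_eq_zero_of_mem_plus_of_mem_minus hskew hp hm
  obtain ⟨p, hp, m, hm, rfl⟩ := exists_plus_add_minus hJJ v
  have h := Submodule.inner_right_of_mem_orthogonal hp hv
  rw [inner_add_right, inner_eq_zero_of_mem_plus_of_mem_minus hskew hp hm, add_zero,
    inner_self_eq_zero] at h
  rwa [h, zero_add]

theorem orthogonal_minusEigenspace (hJJ : ∀ x, J (J x) = -x)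
    (hskew : ∀ x y, ⟪J x, y⟫ = -⟪x, J y⟫) : (minusEigenspace J)ᗮ = plusEigenspace J := by
  refine le_antisymm (fun v hv => ?_) fun p hp m hm =>
    inner_eq_zero_symm.1 (inner_eq_zero_of_mem_plus_of_mem_minus hskew hp hm)
  obtain ⟨p, hp, m, hm, rfl⟩ := exists_plus_add_minus hJJ v
  have h := Submodule.inner_right_of_mem_orthogonal hm hv
  rw [inner_add_right, inner_eq_zero_symm.1 (inner_eq_zero_of_mem_plus_of_mem_minus hskew hp hm),
    zero_add, inner_self_eq_zero] at h
  rwa [h, add_zero]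

theorem apply_I_smul_add {p m : E} (hp : p ∈ plusEigenspace J) (hm : m ∈ minusEigenspace J) :
    J (I • (p + m)) = m - p := by
  simp only [map_smul, map_add, mem_plusEigenspace.1 hp, mem_minusEigenspace.1 hm, smul_add,
    smul_neg, smul_smul, I_mul_I, neg_one_smul, neg_neg]
  abel

theorem inner_add_apply_add (hskew : ∀ x y, ⟪J x, y⟫ = -⟪x, J y⟫) {p m : E}
    (hp : p ∈ plusEigenspace J) (hm : m ∈ minusEigenspace J) :
    ⟪p + m, J (p + m)⟫ = I * ((‖p‖ ^ 2 - ‖m‖ ^ 2 : ℝ) : ℂ) := by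
  have hpm := inner_eq_zero_of_mem_plus_of_mem_minus hskew hp hm
  have hmp := inner_eq_zero_symm.1 hpm
  rw [map_add, mem_plusEigenspace.1 hp, mem_minusEigenspace.1 hm]
  simp only [inner_add_left, inner_add_right, inner_neg_right, inner_smul_right, hpm, hmp,
    inner_self_eq_norm_sq_to_K, RCLike.ofReal_eq_complex_ofReal, ofReal_sub, ofReal_pow]
  ring

theorem apply_mem_of_mapsTo_plus {V : Submodule ℂ E} (hJJ : ∀ x, J (J x) = -x)
    (hT : ∀ x ∈ plusEigenspace J, T x ∈ V) (hT₀ : ∀ x ∈ minusEigenspace J, T x = 0) (x : E) :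
    T x ∈ V := by
  obtain ⟨p, hp, m, hm, rfl⟩ := exists_plus_add_minus hJJ x
  rw [map_add, hT₀ m hm, add_zero]
  exact hT p hp

section Adjoint

variable [CompleteSpace E]

theorem adjoint_apply_mem_plus (hJJ : ∀ x, J (J x) = -x)
    (hskew : ∀ x y, ⟪J x, y⟫ = -⟪x, J y⟫) (hT₀ : ∀ x ∈ minusEigenspace J, T x = 0) (z : E) :
    adjoint T z ∈ plusEigenspace J :=
  orthogonal_minusEigenspace hJJ hskew ▸ adjoint_apply_mem_orthogonal hT₀ z

theorem adjoint_apply_eq_zero_of_mem_minus (hJJ : ∀ x, J (J x) = -x)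
    (hskew : ∀ x y, ⟪J x, y⟫ = -⟪x, J y⟫)
    (hT : ∀ x ∈ plusEigenspace J, T x ∈ plusEigenspace J)
    (hT₀ : ∀ x ∈ minusEigenspace J, T x = 0) {z : E} (hz : z ∈ minusEigenspace J) :
    adjoint T z = 0 :=
  adjoint_apply_eq_zero_of_mem_orthogonal (apply_mem_of_mapsTo_plus hJJ hT hT₀)
    (orthogonal_plusEigenspace hJJ hskew ▸ hz)

theorem adjoint_apply_eq_zero_of_mem_plus (hJJ : ∀ x, J (J x) = -x)
    (hskew : ∀ x y, ⟪J x, y⟫ = -⟪x, J y⟫)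
    (hT : ∀ x ∈ plusEigenspace J, T x ∈ minusEigenspace J)
    (hT₀ : ∀ x ∈ minusEigenspace J, T x = 0) {z : E} (hz : z ∈ plusEigenspace J) :
    adjoint T z = 0 :=
  adjoint_apply_eq_zero_of_mem_orthogonal (apply_mem_of_mapsTo_plus hJJ hT hT₀)
    (orthogonal_minusEigenspace hJJ hskew ▸ hz)

end Adjoint

variable (J) in
def IsSymplectic (S : E →L[ℂ] E) : Prop :=
  ∀ x y, ⟪S x, J (S y)⟫ = ⟪x, J y⟫

namespace IsSymplectic

variable {S : E →L[ℂ] E}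

theorem of_rightInverse (hS : IsSymplectic J S) (h : ∀ x, S (T x) = x) : IsSymplectic J T :=
  fun x y => by rw [← hS, h, h]

theorem adjoint_apply [CompleteSpace E] (hS : IsSymplectic J S) (x : E) :
    adjoint S (J (S x)) = J x :=
  ext_inner_left ℂ fun v => by rw [adjoint_inner_right, hS]

theorem rightInverse_apply [CompleteSpace E] (hJJ : ∀ x, J (J x) = -x) (hS : IsSymplectic J S)
    (h : ∀ x, S (T x) = x) (z : E) : T z = -J (adjoint S (J z)) := by
  conv_rhs => rw [← h z, hS.adjoint_apply, hJJ, neg_neg]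

theorem rightInverse_apply_of_mem_plus [CompleteSpace E] (hJJ : ∀ x, J (J x) = -x)
    (hS : IsSymplectic J S) (h : ∀ x, S (T x) = x) {x p m : E} (hx : x ∈ plusEigenspace J)
    (hp : p ∈ plusEigenspace J) (hm : m ∈ minusEigenspace J) (hSx : adjoint S x = p + m) :
    T x = p - m := by
  rw [hS.rightInverse_apply hJJ h, mem_plusEigenspace.1 hx, map_smul, hSx, apply_I_smul_add hp hm,
    neg_sub]

theorem rightInverse_apply_of_mem_minus [CompleteSpace E] (hJJ : ∀ x, J (J x) = -x)
    (hS : IsSymplectic J S) (h : ∀ x, S (T x) = x) {x p m : E} (hx : x ∈ minusEigenspace J)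
    (hp : p ∈ plusEigenspace J) (hm : m ∈ minusEigenspace J) (hSx : adjoint S x = p + m) :
    T x = m - p := by
  rw [hS.rightInverse_apply hJJ h, mem_minusEigenspace.1 hx, map_neg, map_smul, hSx, map_neg,
    neg_neg, apply_I_smul_add hp hm]

theorem norm_le (hskew : ∀ x y, ⟪J x, y⟫ = -⟪x, J y⟫) (hS : IsSymplectic J S) {x p : E}
    (hx : x ∈ plusEigenspace J) (hp : p ∈ plusEigenspace J)
    (hm : S x - p ∈ minusEigenspace J) : ‖x‖ ≤ ‖p‖ := by
  have hx' := inner_add_apply_add hskew hx (Submodule.zero_mem _)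
  rw [add_zero, norm_zero] at hx'
  have h := hS x x
  rw [← add_sub_cancel p (S x), inner_add_apply_add hskew hp hm, hx'] at h
  have h2 := ofReal_injective (mul_left_cancel₀ I_ne_zero h)
  nlinarith [norm_nonneg x, norm_nonneg p, sq_nonneg ‖S x - p‖]

end IsSymplectic

section Conjugation

variable {α : E → E}

theorem inner_conj_comm (hα_invol : ∀ x, α (α x) = x)
    (hα_inner : ∀ x y, ⟪α x, α y⟫ = ⟪y, x⟫) (x y : E) : ⟪α x, y⟫ = ⟪α y, x⟫ := by
  conv_lhs => rw [← hα_invol y]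
  rw [hα_inner]

theorem inner_conj_apply_conj [CompleteSpace E] (hα_invol : ∀ x, α (α x) = x)
    (hα_inner : ∀ x y, ⟪α x, α y⟫ = ⟪y, x⟫) (x y : E) :
    ⟪x, α (T (α y))⟫ = ⟪α (adjoint T (α x)), y⟫ := by
  rw [inner_conj_comm hα_invol hα_inner _ y, adjoint_inner_right, ← hα_inner, hα_invol]

theorem adjoint_apply_of_apply_eq_add_conj [CompleteSpace E] (hα_invol : ∀ x, α (α x) = x)
    (hα_inner : ∀ x y, ⟪α x, α y⟫ = ⟪y, x⟫) {u : E →L[ℂ] E}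
    (hu : ∀ x, u x = T x + α (T (α x))) (z : E) :
    adjoint u z = adjoint T z + α (adjoint T (α z)) :=
  ext_inner_right ℂ fun w => by
    rw [adjoint_inner_left, hu, inner_add_right, inner_add_left, adjoint_inner_left,
      inner_conj_apply_conj hα_invol hα_inner]

theorem conj_mem_minus (hα_smul : ∀ (c : ℂ) (x : E), α (c • x) = (starRingEnd ℂ) c • α x)
    (hJα : ∀ x, J (α x) = α (J x)) {x : E} (hx : x ∈ plusEigenspace J) :
    α x ∈ minusEigenspace J := by
  rw [mem_minusEigenspace, hJα, mem_plusEigenspace.1 hx, hα_smul, conj_I, neg_smul]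

theorem conj_mem_plus (hα_smul : ∀ (c : ℂ) (x : E), α (c • x) = (starRingEnd ℂ) c • α x)
    (hJα : ∀ x, J (α x) = α (J x)) {x : E} (hx : x ∈ minusEigenspace J) :
    α x ∈ plusEigenspace J := by
  rw [mem_plusEigenspace, hJα, mem_minusEigenspace.1 hx, ← neg_smul, hα_smul, map_neg, conj_I,
    neg_neg]

theorem apply_eq_add_conj (hJJ : ∀ x, J (J x) = -x) (hα_add : ∀ x y, α (x + y) = α x + α y)
    (hα_smul : ∀ (c : ℂ) (x : E), α (c • x) = (starRingEnd ℂ) c • α x)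
    (hα_invol : ∀ x, α (α x) = x) (hJα : ∀ x, J (α x) = α (J x)) {u : E →L[ℂ] E}
    (hu_α : ∀ x, u (α x) = α (u x)) (hT₀ : ∀ x ∈ minusEigenspace J, T x = 0)
    (hu : ∀ x ∈ plusEigenspace J, u x = T x) (x : E) : u x = T x + α (T (α x)) := by
  obtain ⟨p, hp, m, hm, rfl⟩ := exists_plus_add_minus hJJ x
  have hum : u m = α (T (α m)) := by
    rw [← hu _ (conj_mem_plus hα_smul hJα hm), ← hu_α, hα_invol]
  rw [map_add, hu p hp, hum, map_add, hT₀ m hm, hα_add, map_add,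
    hT₀ _ (conj_mem_minus hα_smul hJα hp), add_zero, zero_add]

end Conjugation

end ComplexStructure

theorem symplectomorphism_block_inverse_general {E : Type*} [NormedAddCommGroup E]
    [InnerProductSpace ℂ E] [CompleteSpace E]
    (α : E → E) (J : E →L[ℂ] E)
    (hα_add : ∀ x y, α (x + y) = α x + α y)
    (hα_smul : ∀ (c : ℂ) (x : E), α (c • x) = (starRingEnd ℂ) c • α x)
    (hα_invol : ∀ x, α (α x) = x)
    (hα_inner : ∀ x y, (inner ℂ (α x) (α y) : ℂ) = (inner ℂ y x : ℂ))
    (hJJ : ∀ x, J (J x) = -x)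
    (hJα : ∀ x, J (α x) = α (J x))
    (hJskew : ∀ x y, (inner ℂ (J x) y : ℂ) = - (inner ℂ x (J y) : ℂ))
    (u u' a b : E →L[ℂ] E)
    (hu_symp : ∀ x y, (inner ℂ (α (u y)) (J (u x)) : ℂ) = (inner ℂ (α y) (J x) : ℂ))
    (hu_α : ∀ x, u (α x) = α (u x))
    (hu'u : ∀ x, u (u' x) = x)
    (ha_mem : ∀ x ∈ LinearMap.ker (((J - Complex.I • (1 : E →L[ℂ] E) : E →L[ℂ] E) : E →ₗ[ℂ] E)),
      a x ∈ LinearMap.ker (((J - Complex.I • (1 : E →L[ℂ] E) : E →L[ℂ] E) : E →ₗ[ℂ] E)))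
    (ha_zero : ∀ x ∈ LinearMap.ker (((J + Complex.I • (1 : E →L[ℂ] E) : E →L[ℂ] E) : E →ₗ[ℂ] E)), a x = 0)
    (hb_mem : ∀ x ∈ LinearMap.ker (((J - Complex.I • (1 : E →L[ℂ] E) : E →L[ℂ] E) : E →ₗ[ℂ] E)),
      b x ∈ LinearMap.ker (((J + Complex.I • (1 : E →L[ℂ] E) : E →L[ℂ] E) : E →ₗ[ℂ] E)))
    (hb_zero : ∀ x ∈ LinearMap.ker (((J + Complex.I • (1 : E →L[ℂ] E) : E →L[ℂ] E) : E →ₗ[ℂ] E)), b x = 0)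
    (hblock : ∀ x ∈ LinearMap.ker (((J - Complex.I • (1 : E →L[ℂ] E) : E →L[ℂ] E) : E →ₗ[ℂ] E)), u x = a x + b x) :
    Set.BijOn (⇑a)
      ((LinearMap.ker (((J - Complex.I • (1 : E →L[ℂ] E) : E →L[ℂ] E) : E →ₗ[ℂ] E)) : Submodule ℂ E) : Set E)
      ((LinearMap.ker (((J - Complex.I • (1 : E →L[ℂ] E) : E →L[ℂ] E) : E →ₗ[ℂ] E)) : Submodule ℂ E) : Set E) ∧
    (∀ x ∈ LinearMap.ker (((J - Complex.I • (1 : E →L[ℂ] E) : E →L[ℂ] E) : E →ₗ[ℂ] E)),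
      u' x = ContinuousLinearMap.adjoint a x - α (ContinuousLinearMap.adjoint b (α x))) ∧
    (∀ y ∈ LinearMap.ker (((J + Complex.I • (1 : E →L[ℂ] E) : E →L[ℂ] E) : E →ₗ[ℂ] E)),
      u' y = α (ContinuousLinearMap.adjoint a (α y)) - ContinuousLinearMap.adjoint b y) := by
  have hsymp : IsSymplectic J u := fun x y => by
    simpa only [hu_α, hα_invol] using hu_symp y (α x)
  have hα_minus : ∀ x ∈ plusEigenspace J, α x ∈ minusEigenspace J :=
    fun _ => conj_mem_minus hα_smul hJα
  have ha' := adjoint_apply_mem_plus hJJ hJskew ha_zero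
  have hb' := adjoint_apply_mem_plus hJJ hJskew hb_zero
  have ha'₀ := fun z => adjoint_apply_eq_zero_of_mem_minus (z := z) hJJ hJskew ha_mem ha_zero
  have hb'₀ := fun z => adjoint_apply_eq_zero_of_mem_plus (z := z) hJJ hJskew hb_mem hb_zero
  have hu_adj := adjoint_apply_of_apply_eq_add_conj hα_invol hα_inner
    (apply_eq_add_conj hJJ hα_add hα_smul hα_invol hJα hu_α (T := a + b)
      (fun x hx => by simp [ha_zero x hx, hb_zero x hx]) hblock)
  have hu'_plus : ∀ x ∈ plusEigenspace J, u' x = adjoint a x - α (adjoint b (α x)) :=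
    fun x hx => hsymp.rightInverse_apply_of_mem_plus hJJ hu'u hx (ha' x) (hα_minus _ (hb' _))
      (by simp [hu_adj, hb'₀ x hx, ha'₀ _ (hα_minus x hx)])
  have hu'_minus : ∀ y ∈ minusEigenspace J, u' y = α (adjoint a (α y)) - adjoint b y :=
    fun y hy => hsymp.rightInverse_apply_of_mem_minus hJJ hu'u hy (hb' y) (hα_minus _ (ha' _))
      (by simp [hu_adj, ha'₀ y hy, hb'₀ _ (conj_mem_plus hα_smul hJα hy)])
  have : CompleteSpace (plusEigenspace J) := isClosed_plusEigenspace.completeSpace_coe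
  refine ⟨bijOn_of_norm_le_mul 1 ha_mem (fun z _ => ha' z) (fun x hx => ?_)
    (fun z hz hz₀ => ?_), hu'_plus, hu'_minus⟩
  · simpa using hsymp.norm_le hJskew hx (ha_mem x hx)
      (by rw [hblock x hx, add_sub_cancel_left]; exact hb_mem x hx)
  · have h := (hsymp.of_rightInverse hu'u).norm_le hJskew hz (ha' z)
      (by rw [hu'_plus z hz, sub_sub_cancel_left]; exact neg_mem (hα_minus _ (hb' _)))
    rwa [hz₀, norm_zero, norm_le_zero_iff] at h

/-- For a bounded symplectomorphism u of the complexification, with block form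
u = [[a, αbα],[b, αaα]] relative to E = L⁺ ⊕ L⁻, the block a is invertible (a bijection of L⁺)
and u⁻¹ = [[a*, -b*],[-αb*α, αa*α]]. Here ω(x,y) = g(Jx, αy), and a, b are encoded as the
operators on E which vanish on L⁻ and give the two components of u on L⁺. -/
theorem symplectomorphism_block_inverse {E : Type*} [NormedAddCommGroup E]
    [InnerProductSpace ℂ E] [CompleteSpace E]
    (α : E → E) (J : E →L[ℂ] E)
    (hα_add : ∀ x y, α (x + y) = α x + α y)
    (hα_smul : ∀ (c : ℂ) (x : E), α (c • x) = (starRingEnd ℂ) c • α x)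
    (hα_invol : ∀ x, α (α x) = x)
    (hα_inner : ∀ x y, (inner ℂ (α x) (α y) : ℂ) = (inner ℂ y x : ℂ))
    (hJJ : ∀ x, J (J x) = -x)
    (hJα : ∀ x, J (α x) = α (J x))
    (hJskew : ∀ x y, (inner ℂ (J x) y : ℂ) = - (inner ℂ x (J y) : ℂ))
    (u u' a b : E →L[ℂ] E)
    (hu_symp : ∀ x y, (inner ℂ (α (u y)) (J (u x)) : ℂ) = (inner ℂ (α y) (J x) : ℂ))
    (hu_α : ∀ x, u (α x) = α (u x))
    (huu' : ∀ x, u' (u x) = x) (hu'u : ∀ x, u (u' x) = x)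
    (ha_mem : ∀ x ∈ LinearMap.ker (((J - Complex.I • (1 : E →L[ℂ] E) : E →L[ℂ] E) : E →ₗ[ℂ] E)),
      a x ∈ LinearMap.ker (((J - Complex.I • (1 : E →L[ℂ] E) : E →L[ℂ] E) : E →ₗ[ℂ] E)))
    (ha_zero : ∀ x ∈ LinearMap.ker (((J + Complex.I • (1 : E →L[ℂ] E) : E →L[ℂ] E) : E →ₗ[ℂ] E)), a x = 0)
    (hb_mem : ∀ x ∈ LinearMap.ker (((J - Complex.I • (1 : E →L[ℂ] E) : E →L[ℂ] E) : E →ₗ[ℂ] E)),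
      b x ∈ LinearMap.ker (((J + Complex.I • (1 : E →L[ℂ] E) : E →L[ℂ] E) : E →ₗ[ℂ] E)))
    (hb_zero : ∀ x ∈ LinearMap.ker (((J + Complex.I • (1 : E →L[ℂ] E) : E →L[ℂ] E) : E →ₗ[ℂ] E)), b x = 0)
    (hblock : ∀ x ∈ LinearMap.ker (((J - Complex.I • (1 : E →L[ℂ] E) : E →L[ℂ] E) : E →ₗ[ℂ] E)), u x = a x + b x) :
    Set.BijOn (⇑a)
      ((LinearMap.ker (((J - Complex.I • (1 : E →L[ℂ] E) : E →L[ℂ] E) : E →ₗ[ℂ] E)) : Submodule ℂ E) : Set E)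
      ((LinearMap.ker (((J - Complex.I • (1 : E →L[ℂ] E) : E →L[ℂ] E) : E →ₗ[ℂ] E)) : Submodule ℂ E) : Set E) ∧
    (∀ x ∈ LinearMap.ker (((J - Complex.I • (1 : E →L[ℂ] E) : E →L[ℂ] E) : E →ₗ[ℂ] E)),
      u' x = ContinuousLinearMap.adjoint a x - α (ContinuousLinearMap.adjoint b (α x))) ∧
    (∀ y ∈ LinearMap.ker (((J + Complex.I • (1 : E →L[ℂ] E) : E →L[ℂ] E) : E →ₗ[ℂ] E)),
      u' y = α (ContinuousLinearMap.adjoint a (α y)) - ContinuousLinearMap.adjoint b y) :=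
  symplectomorphism_block_inverse_general α J hα_add hα_smul hα_invol hα_inner hJJ hJα hJskew u u' a
    b hu_symp hu_α hu'u ha_mem ha_zero hb_mem hb_zero hblock
end

section
/- Let u ∈ Sp(H) with block decomposition [[a, αbα],[b, αaα]]. The following are equivalent: (1) the projection of u(L⁺) onto L⁻ = α(L⁺) along the decomposition u(L⁺) ⊕ u(L⁻) restricted to L⁺ is Hilbert–Schmidt (u is in the restricted symplectic group); (2) b is Hilbert–Schmidt; (3) u⁻¹Ju - J is Hilbert–Schmidt. Moreover u⁻¹Ju - J = 2i·[[b*b, b*αaα],[-αb*αa, -αb*bα]]. -/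
/-!
On `L⁺` the block form gives `J (u x) = i u x - 2i b x`, hence `u⁻¹Ju - J = -2i u⁻¹ b` there;
since `u`, `u⁻¹` and `J` commute with `α`, the values on `L⁻ = α L⁺` are the `α`-conjugates.
So `(u⁻¹Ju - J) Pp = -2i u⁻¹ b`, and `(u⁻¹Ju - J) Pm` is the `α`-conjugate of that operator.
An antiunitary involution maps Hilbert bases to Hilbert bases and Hilbert–Schmidtness does not
depend on the basis (both `∑ ‖T eᵢ‖²` and `∑ ‖T* fⱼ‖²` are the double sum `∑ |⟪fⱼ, T eᵢ⟫|²`),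
so `u⁻¹Ju - J` is Hilbert–Schmidt iff `b` is; and `Pm u Pp = b`.

The explicit formula needs `u⁻¹` on `L⁺`: testing the symplectic identity
`⟪α (u y), J (u x)⟫ = ⟪α y, J x⟫` against vectors of `L⁺` and of `L⁻` gives
`u⁻¹ w = a* w - α b* α w` for `w ∈ L⁺`, and `a* α b = b* α a` on `L⁺`.
-/

open scoped InnerProductSpace InnerProduct

/-- A (bounded) operator between complex Hilbert spaces is Hilbert–Schmidt if the sum
∑ ‖T eᵢ‖² converges for some (equivalently any) Hilbert basis. -/
def IsHilbertSchmidt {E F : Type} [NormedAddCommGroup E] [InnerProductSpace ℂ E]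
    [NormedAddCommGroup F] [InnerProductSpace ℂ F] (T : E →L[ℂ] F) : Prop :=
  ∃ (ι : Type) (b : HilbertBasis ι ℂ E), Summable fun i => ‖T (b i)‖ ^ 2

theorem summable_prod_iff_of_hasSum {ι κ : Type*} {g : ι → κ → ℝ}
    (hg : ∀ i j, 0 ≤ g i j) {s : ι → ℝ} (hs : ∀ i, HasSum (g i) (s i)) :
    Summable (fun p : ι × κ => g p.1 p.2) ↔ Summable s := by
  rw [summable_prod_of_nonneg fun p => hg p.1 p.2]
  simp only [fun i => (hs i).tsum_eq]
  exact ⟨And.right, fun h => ⟨fun i => (hs i).summable, h⟩⟩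

theorem summable_iff_of_hasSum_rows_of_hasSum_cols {ι κ : Type*} {g : ι → κ → ℝ}
    (hg : ∀ i j, 0 ≤ g i j) {s : ι → ℝ} {t : κ → ℝ} (hs : ∀ i, HasSum (g i) (s i))
    (ht : ∀ j, HasSum (fun i => g i j) (t j)) : Summable s ↔ Summable t := by
  rw [← summable_prod_iff_of_hasSum hg hs,
    ← summable_prod_iff_of_hasSum (fun j i => hg i j) ht,
    ← (Equiv.prodComm κ ι).summable_iff]
  rfl

theorem HilbertBasis.hasSum_norm_inner_sq {𝕜 E ι : Type*} [RCLike 𝕜] [NormedAddCommGroup E]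
    [InnerProductSpace 𝕜 E] (e : HilbertBasis ι 𝕜 E) (x : E) :
    HasSum (fun i => ‖⟪e i, x⟫_𝕜‖ ^ 2) (‖x‖ ^ 2) := by
  have h : HasSum (fun i => ‖e.repr x i‖ ^ 2) (‖e.repr x‖ ^ 2) := by
    apply_mod_cast lp.hasSum_norm (by simp) (e.repr x)
  simpa only [e.repr_apply_apply, LinearIsometryEquiv.norm_map] using h

theorem norm_map_of_inner_map_map {E : Type*} [NormedAddCommGroup E]
    [InnerProductSpace ℂ E] {α : E → E} (hα : ∀ x y, ⟪α x, α y⟫_ℂ = ⟪y, x⟫_ℂ) (x : E) :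
    ‖α x‖ = ‖x‖ := by
  rw [norm_eq_sqrt_re_inner (𝕜 := ℂ), norm_eq_sqrt_re_inner (𝕜 := ℂ), hα]

theorem HilbertBasis.exists_coe_eq_comp {E ι : Type*} [NormedAddCommGroup E]
    [InnerProductSpace ℂ E] [CompleteSpace E] {α : E → E} (hα_invol : ∀ x, α (α x) = x)
    (hα_inner : ∀ x y, ⟪α x, α y⟫_ℂ = ⟪y, x⟫_ℂ) (e : HilbertBasis ι ℂ E) :
    ∃ e' : HilbertBasis ι ℂ E, ⇑e' = α ∘ e := by
  have hon : Orthonormal ℂ (α ∘ e) :=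
    ⟨fun i => by rw [Function.comp_apply, norm_map_of_inner_map_map hα_inner, e.orthonormal.1 i],
      fun i j hij => (hα_inner (e i) (e j)).trans (e.orthonormal.2 hij.symm)⟩
  have hsp : (Submodule.span ℂ (Set.range (α ∘ e)))ᗮ = ⊥ := by
    refine (Submodule.eq_bot_iff _).2 fun x hx => ?_
    have hαx : α x = 0 := by
      refine e.repr.injective (lp.ext <| funext fun i => ?_)
      calc e.repr (α x) i = ⟪α (α (e i)), α x⟫_ℂ := by rw [e.repr_apply_apply, hα_invol]
        _ = ⟪x, α (e i)⟫_ℂ := hα_inner _ _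
        _ = e.repr 0 i := by
          rw [map_zero]
          exact Submodule.inner_left_of_mem_orthogonal
            (Submodule.subset_span (Set.mem_range_self i)) hx
    rw [← norm_eq_zero, ← norm_map_of_inner_map_map hα_inner, hαx, norm_zero]
  exact ⟨.mkOfOrthogonalEqBot hon hsp, HilbertBasis.coe_mkOfOrthogonalEqBot hon hsp⟩

section HilbertSchmidt

variable {E F G : Type} [NormedAddCommGroup E] [InnerProductSpace ℂ E]
  [NormedAddCommGroup F] [InnerProductSpace ℂ F] [NormedAddCommGroup G] [InnerProductSpace ℂ G]

namespace IsHilbertSchmidt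

variable {T : E →L[ℂ] F}

theorem clm_comp (hT : IsHilbertSchmidt T) (S : F →L[ℂ] G) : IsHilbertSchmidt (S.comp T) := by
  obtain ⟨ι, e, h⟩ := hT
  refine ⟨ι, e, (h.mul_left (‖S‖ ^ 2)).of_nonneg_of_le (fun _ => by positivity) fun i => ?_⟩
  rw [← mul_pow]
  exact pow_le_pow_left₀ (norm_nonneg _) (S.le_opNorm _) 2

theorem smul (hT : IsHilbertSchmidt T) (c : ℂ) : IsHilbertSchmidt (c • T) := by
  obtain ⟨ι, e, h⟩ := hT
  refine ⟨ι, e, ?_⟩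
  simpa only [FunLike.coe_smul, Pi.smul_apply, norm_smul, mul_pow] using
    h.mul_left (‖c‖ ^ 2)

end IsHilbertSchmidt

variable [CompleteSpace E] [CompleteSpace F]

theorem HilbertBasis.summable_norm_sq_apply_iff {ι κ : Type*} (e : HilbertBasis ι ℂ E)
    (f : HilbertBasis κ ℂ F) (T : E →L[ℂ] F) :
    Summable (fun i => ‖T (e i)‖ ^ 2) ↔ Summable (fun j => ‖(T†) (f j)‖ ^ 2) :=
  summable_iff_of_hasSum_rows_of_hasSum_cols (g := fun i j => ‖⟪f j, T (e i)⟫_ℂ‖ ^ 2)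
    (fun _ _ => by positivity) (fun i => f.hasSum_norm_inner_sq _) fun j => by
      simpa only [ContinuousLinearMap.adjoint_inner_right, norm_inner_symm (T _)] using
        e.hasSum_norm_inner_sq ((T†) (f j))

namespace IsHilbertSchmidt

variable {T : E →L[ℂ] F}

theorem summable (hT : IsHilbertSchmidt T) {ι : Type*} (e : HilbertBasis ι ℂ E) :
    Summable fun i => ‖T (e i)‖ ^ 2 := by
  obtain ⟨ι₀, e₀, h⟩ := hT
  obtain ⟨w, f, -⟩ := exists_hilbertBasis ℂ F
  exact (e.summable_norm_sq_apply_iff f T).2 ((e₀.summable_norm_sq_apply_iff f T).1 h)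

theorem adjoint (hT : IsHilbertSchmidt T) : IsHilbertSchmidt (T†) := by
  obtain ⟨ι₀, e₀, h⟩ := hT
  obtain ⟨w, f, -⟩ := exists_hilbertBasis ℂ F
  exact ⟨w, f, (e₀.summable_norm_sq_apply_iff f T).1 h⟩

theorem comp_clm [CompleteSpace G] (hT : IsHilbertSchmidt T) (R : G →L[ℂ] E) :
    IsHilbertSchmidt (T.comp R) := by
  simpa only [ContinuousLinearMap.adjoint_comp, ContinuousLinearMap.adjoint_adjoint] using
    (hT.adjoint.clm_comp (R†)).adjoint

theorem add {S : E →L[ℂ] F} (hS : IsHilbertSchmidt S) (hT : IsHilbertSchmidt T) :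
    IsHilbertSchmidt (S + T) := by
  obtain ⟨ι, e, h⟩ := hS
  refine ⟨ι, e, ((h.add (hT.summable e)).mul_left 2).of_nonneg_of_le (fun _ => by positivity)
    fun i => ?_⟩
  calc ‖(S + T) (e i)‖ ^ 2 ≤ (‖S (e i)‖ + ‖T (e i)‖) ^ 2 := by gcongr; exact norm_add_le _ _
    _ ≤ 2 * (‖S (e i)‖ ^ 2 + ‖T (e i)‖ ^ 2) := add_sq_le

theorem of_apply_eq_conj {α : E → E} (hα_invol : ∀ x, α (α x) = x)
    (hα_inner : ∀ x y, ⟪α x, α y⟫_ℂ = ⟪y, x⟫_ℂ) {T T' : E →L[ℂ] E} (hT : IsHilbertSchmidt T)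
    (hT' : ∀ x, T' x = α (T (α x))) : IsHilbertSchmidt T' := by
  obtain ⟨w, e, -⟩ := exists_hilbertBasis ℂ E
  obtain ⟨e', he'⟩ := e.exists_coe_eq_comp hα_invol hα_inner
  refine ⟨w, e, ?_⟩
  simpa only [hT', norm_map_of_inner_map_map hα_inner, he', Function.comp_apply] using
    hT.summable e'

end IsHilbertSchmidt

end HilbertSchmidt

theorem ContinuousLinearMap.mem_ker_sub_smul_one_iff {R M : Type*} [CommRing R]
    [TopologicalSpace M] [AddCommGroup M] [IsTopologicalAddGroup M] [Module R M]
    [ContinuousConstSMul R M] {T : M →L[R] M} {c : R} {x : M} :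
    x ∈ LinearMap.ker (T - c • 1 : M →L[R] M).toLinearMap ↔ T x = c • x := by
  simp [sub_eq_zero]

theorem ContinuousLinearMap.mem_ker_add_smul_one_iff {R M : Type*} [CommRing R]
    [TopologicalSpace M] [AddCommGroup M] [IsTopologicalAddGroup M] [Module R M]
    [ContinuousConstSMul R M] {T : M →L[R] M} {c : R} {x : M} :
    x ∈ LinearMap.ker (T + c • 1 : M →L[R] M).toLinearMap ↔ T x = -(c • x) := by
  simp [add_eq_zero_iff_eq_neg]

theorem Submodule.eq_of_forall_inner_left_eq {𝕜 E : Type*} [RCLike 𝕜] [NormedAddCommGroup E]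
    [InnerProductSpace 𝕜 E] {K : Submodule 𝕜 E} {v w : E} (hv : v ∈ K) (hw : w ∈ K)
    (h : ∀ x ∈ K, ⟪v, x⟫_𝕜 = ⟪w, x⟫_𝕜) : v = w := by
  rw [← sub_eq_zero, ← inner_self_eq_zero (𝕜 := 𝕜), inner_sub_left, h _ (K.sub_mem hv hw),
    sub_self]

open ContinuousLinearMap (mem_ker_sub_smul_one_iff mem_ker_add_smul_one_iff)

section Splitting

variable {E : Type} [NormedAddCommGroup E] [InnerProductSpace ℂ E] {α : E →ₗ⋆[ℂ] E}
  {J : E →L[ℂ] E}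

local notation "L⁺" => LinearMap.ker (ContinuousLinearMap.toLinearMap (J - Complex.I • 1))
local notation "L⁻" => LinearMap.ker (ContinuousLinearMap.toLinearMap (J + Complex.I • 1))

theorem eq_zero_of_mem_plus_of_mem_minus {x : E} (hp : x ∈ L⁺) (hm : x ∈ L⁻) : x = 0 := by
  rw [mem_ker_sub_smul_one_iff] at hp
  rw [mem_ker_add_smul_one_iff, hp, eq_neg_iff_add_eq_zero, ← two_smul ℂ, smul_smul] at hm
  exact (smul_eq_zero.1 hm).resolve_left (by simp)

variable (J) in
structure IsSplitting (Pp Pm : E →L[ℂ] E) : Prop where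
  plus_mem : ∀ x, Pp x ∈ L⁺
  minus_mem : ∀ x, Pm x ∈ L⁻
  add_eq : ∀ x, Pp x + Pm x = x

namespace IsSplitting

variable {Pp Pm : E →L[ℂ] E}

theorem apply_add (hP : IsSplitting J Pp Pm) {p m : E} (hp : p ∈ L⁺) (hm : m ∈ L⁻) :
    Pp (p + m) = p ∧ Pm (p + m) = m := by
  have h : Pp (p + m) - p = m - Pm (p + m) := by
    rw [sub_eq_sub_iff_add_eq_add, hP.add_eq, add_comm]
  have h0 := eq_zero_of_mem_plus_of_mem_minus (sub_mem (hP.plus_mem _) hp)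
    (h ▸ sub_mem hm (hP.minus_mem _))
  exact ⟨sub_eq_zero.1 h0, (sub_eq_zero.1 (h ▸ h0)).symm⟩

end IsSplitting

variable (α J) in
structure IsCompatibleConjugation : Prop where
  conj_conj : ∀ x, α (α x) = x
  inner_conj_conj : ∀ x y, ⟪α x, α y⟫_ℂ = ⟪y, x⟫_ℂ
  J_conj : ∀ x, J (α x) = α (J x)
  inner_J_left : ∀ x y, ⟪J x, y⟫_ℂ = -⟪x, J y⟫_ℂ

namespace IsCompatibleConjugation

variable {x y : E}

theorem conj_mem_minus (hC : IsCompatibleConjugation α J) (hx : x ∈ L⁺) : α x ∈ L⁻ := by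
  rw [mem_ker_sub_smul_one_iff] at hx
  rw [mem_ker_add_smul_one_iff, hC.J_conj, hx, map_smulₛₗ, Complex.conj_I, neg_smul]

theorem conj_mem_plus (hC : IsCompatibleConjugation α J) (hx : x ∈ L⁻) : α x ∈ L⁺ := by
  rw [mem_ker_add_smul_one_iff] at hx
  rw [mem_ker_sub_smul_one_iff, hC.J_conj, hx, map_neg, map_smulₛₗ, Complex.conj_I, neg_smul,
    neg_neg]

theorem inner_eq_zero_of_mem_plus_of_mem_minus (hC : IsCompatibleConjugation α J) (hx : x ∈ L⁺)
    (hy : y ∈ L⁻) : ⟪x, y⟫_ℂ = 0 := by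
  have h := hC.inner_J_left x y
  rw [mem_ker_sub_smul_one_iff.1 hx, mem_ker_add_smul_one_iff.1 hy, inner_smul_left,
    inner_neg_right, inner_smul_right, Complex.conj_I, neg_neg] at h
  have h2 : (2 * Complex.I) * ⟪x, y⟫_ℂ = 0 := by linear_combination -h
  exact (mul_eq_zero.1 h2).resolve_left (by simp)

theorem inner_eq_zero_of_mem_minus_of_mem_plus (hC : IsCompatibleConjugation α J) (hx : x ∈ L⁻)
    (hy : y ∈ L⁺) : ⟪x, y⟫_ℂ = 0 :=
  inner_eq_zero_symm.1 (hC.inner_eq_zero_of_mem_plus_of_mem_minus hy hx)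

theorem mem_plus_of_forall_inner_eq_zero (hC : IsCompatibleConjugation α J) {Pp Pm : E →L[ℂ] E}
    (hP : IsSplitting J Pp Pm) {v : E} (h : ∀ y ∈ L⁻, ⟪y, v⟫_ℂ = 0) : v ∈ L⁺ := by
  have hm : Pm v = 0 := by
    rw [← inner_self_eq_zero (𝕜 := ℂ)]
    calc ⟪Pm v, Pm v⟫_ℂ = ⟪Pm v, Pp v + Pm v⟫_ℂ := by
          rw [inner_add_right,
            hC.inner_eq_zero_of_mem_minus_of_mem_plus (hP.minus_mem v) (hP.plus_mem v), zero_add]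
      _ = 0 := by rw [hP.add_eq]; exact h _ (hP.minus_mem v)
  have hv := hP.add_eq v
  rw [hm, add_zero] at hv
  exact hv ▸ hP.plus_mem v

theorem adjoint_apply_mem_plus [CompleteSpace E] (hC : IsCompatibleConjugation α J)
    {Pp Pm : E →L[ℂ] E} (hP : IsSplitting J Pp Pm) {T : E →L[ℂ] E} (hT : ∀ x ∈ L⁻, T x = 0)
    (y : E) : (T†) y ∈ L⁺ :=
  hC.mem_plus_of_forall_inner_eq_zero hP fun x hx => by
    rw [ContinuousLinearMap.adjoint_inner_right, hT x hx, inner_zero_left]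

end IsCompatibleConjugation

theorem IsSplitting.plus_apply_conj {Pp Pm : E →L[ℂ] E} (hP : IsSplitting J Pp Pm)
    (hC : IsCompatibleConjugation α J) (z : E) : Pp (α z) = α (Pm z) := by
  conv_lhs => rw [← hP.add_eq z, map_add, add_comm]
  exact (hP.apply_add (hC.conj_mem_plus (hP.minus_mem z)) (hC.conj_mem_minus (hP.plus_mem z))).1

variable (α J) in
/-- `u ∈ Sp(H)`, acting on the complexification, with block form `[[a, αbα], [b, αaα]]`
on `L⁺ ⊕ L⁻`; the symplectic form is `ω(x, y) = ⟪α x, J y⟫`. -/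
structure IsSymplecticBlocks (u a b : E →L[ℂ] E) : Prop where
  inner_conj_J : ∀ x y, ⟪α (u y), J (u x)⟫_ℂ = ⟪α y, J x⟫_ℂ
  conj : ∀ x, u (α x) = α (u x)
  a_mem : ∀ x ∈ L⁺, a x ∈ L⁺
  a_eq_zero : ∀ x ∈ L⁻, a x = 0
  b_mem : ∀ x ∈ L⁺, b x ∈ L⁻
  b_eq_zero : ∀ x ∈ L⁻, b x = 0
  apply_eq : ∀ x ∈ L⁺, u x = a x + b x

namespace IsSymplecticBlocks

variable {u u' a b Pp Pm : E →L[ℂ] E} {x y : E}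

theorem b_apply_plus (hu : IsSymplecticBlocks α J u a b) (hP : IsSplitting J Pp Pm) (z : E) :
    b (Pp z) = b z := by
  conv_rhs => rw [← hP.add_eq z, map_add, hu.b_eq_zero _ (hP.minus_mem z), add_zero]

theorem minus_comp_comp_plus (hu : IsSymplecticBlocks α J u a b) (hP : IsSplitting J Pp Pm) :
    Pm.comp (u.comp Pp) = b := by
  ext z
  rw [ContinuousLinearMap.comp_apply, ContinuousLinearMap.comp_apply,
    hu.apply_eq _ (hP.plus_mem z), ← hu.b_apply_plus hP z]
  exact (hP.apply_add (hu.a_mem _ (hP.plus_mem z)) (hu.b_mem _ (hP.plus_mem z))).2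

theorem J_apply_of_mem_plus (hu : IsSymplecticBlocks α J u a b) (hx : x ∈ L⁺) :
    J (u x) = Complex.I • a x - Complex.I • b x := by
  rw [hu.apply_eq x hx, map_add, mem_ker_sub_smul_one_iff.1 (hu.a_mem x hx),
    mem_ker_add_smul_one_iff.1 (hu.b_mem x hx), sub_eq_add_neg]

theorem inner_conj_b_a (hu : IsSymplecticBlocks α J u a b) (hC : IsCompatibleConjugation α J)
    (hy : y ∈ L⁺) (hx : x ∈ L⁺) : ⟪α (b y), a x⟫_ℂ = ⟪α (a y), b x⟫_ℂ := by
  have h := hu.inner_conj_J x y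
  rw [hu.J_apply_of_mem_plus hx, hu.apply_eq y hy, mem_ker_sub_smul_one_iff.1 hx, map_add] at h
  simp only [inner_add_left, inner_sub_right, inner_smul_right,
    hC.inner_eq_zero_of_mem_minus_of_mem_plus (hC.conj_mem_minus (hu.a_mem y hy)) (hu.a_mem x hx),
    hC.inner_eq_zero_of_mem_plus_of_mem_minus (hC.conj_mem_plus (hu.b_mem y hy)) (hu.b_mem x hx),
    hC.inner_eq_zero_of_mem_minus_of_mem_plus (hC.conj_mem_minus hy) hx] at h
  exact mul_left_cancel₀ Complex.I_ne_zero (by linear_combination h)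

theorem adjoint_a_conj_b [CompleteSpace E] (hu : IsSymplecticBlocks α J u a b)
    (hC : IsCompatibleConjugation α J) (hP : IsSplitting J Pp Pm) (hy : y ∈ L⁺) :
    (a†) (α (b y)) = (b†) (α (a y)) :=
  Submodule.eq_of_forall_inner_left_eq (hC.adjoint_apply_mem_plus hP hu.a_eq_zero _)
    (hC.adjoint_apply_mem_plus hP hu.b_eq_zero _) fun x hx => by
      rw [ContinuousLinearMap.adjoint_inner_left, ContinuousLinearMap.adjoint_inner_left,
        hu.inner_conj_b_a hC hy hx]

theorem inverse_apply_of_mem_plus [CompleteSpace E] (hu : IsSymplecticBlocks α J u a b)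
    (hC : IsCompatibleConjugation α J) (hP : IsSplitting J Pp Pm)
    (hu'₂ : Function.RightInverse u' u) {w : E} (hw : w ∈ L⁺) :
    u' w = (a†) w - α ((b†) (α w)) := by
  set v := u' w
  have hsymp : ∀ x, ⟪α w, J (u x)⟫_ℂ = ⟪α (Pp v) + α (Pm v), J x⟫_ℂ := fun x => by
    rw [← map_add, hP.add_eq, ← hu.inner_conj_J x v, hu'₂ w]
  have hm : α (Pm v) = -(b†) (α w) := by
    refine Submodule.eq_of_forall_inner_left_eq (hC.conj_mem_plus (hP.minus_mem v))
      (neg_mem (hC.adjoint_apply_mem_plus hP hu.b_eq_zero _)) fun x hx => ?_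
    have h := hsymp x
    rw [hu.J_apply_of_mem_plus hx, mem_ker_sub_smul_one_iff.1 hx] at h
    simp only [inner_add_left, inner_sub_right, inner_smul_right,
      hC.inner_eq_zero_of_mem_minus_of_mem_plus (hC.conj_mem_minus hw) (hu.a_mem x hx),
      hC.inner_eq_zero_of_mem_minus_of_mem_plus (hC.conj_mem_minus (hP.plus_mem v)) hx] at h
    rw [inner_neg_left, ContinuousLinearMap.adjoint_inner_left]
    exact mul_left_cancel₀ Complex.I_ne_zero (by linear_combination -h)
  have hp : Pp v = (a†) w := by
    refine Submodule.eq_of_forall_inner_left_eq (hP.plus_mem v)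
      (hC.adjoint_apply_mem_plus hP hu.a_eq_zero _) fun z hz => ?_
    have h := hsymp (α z)
    rw [← map_add, hu.conj, hC.J_conj, hC.J_conj, hC.inner_conj_conj, hC.inner_conj_conj,
      hu.J_apply_of_mem_plus hz, mem_ker_sub_smul_one_iff.1 hz] at h
    simp only [inner_add_right, inner_sub_left, inner_smul_left, Complex.conj_I,
      hC.inner_eq_zero_of_mem_minus_of_mem_plus (hu.b_mem z hz) hw,
      hC.inner_eq_zero_of_mem_plus_of_mem_minus hz (hP.minus_mem v)] at h
    rw [ContinuousLinearMap.adjoint_inner_left, ← inner_conj_symm, ← inner_conj_symm w]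
    exact congrArg _ (mul_left_cancel₀ (neg_ne_zero.2 Complex.I_ne_zero) (by linear_combination -h))
  rw [← hP.add_eq v, hp, ← hC.conj_conj (Pm v), hm, map_neg, sub_eq_add_neg]

theorem inverse_conj (hu : IsSymplecticBlocks α J u a b) (hu'₁ : Function.LeftInverse u' u)
    (hu'₂ : Function.RightInverse u' u) (z : E) : u' (α z) = α (u' z) :=
  hu'₁.injective (by rw [hu'₂, hu.conj, hu'₂])

theorem inverse_b_apply [CompleteSpace E] (hu : IsSymplecticBlocks α J u a b)
    (hC : IsCompatibleConjugation α J) (hP : IsSplitting J Pp Pm)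
    (hu'₁ : Function.LeftInverse u' u) (hu'₂ : Function.RightInverse u' u) (hx : x ∈ L⁺) :
    u' (b x) = α ((b†) (α (a x))) - (b†) (b x) := by
  rw [← hC.conj_conj (b x), hu.inverse_conj hu'₁ hu'₂,
    hu.inverse_apply_of_mem_plus hC hP hu'₂ (hC.conj_mem_plus (hu.b_mem x hx)),
    hu.adjoint_a_conj_b hC hP hx, map_sub, hC.conj_conj, hC.conj_conj]

theorem inverse_J_apply_sub_J_eq_smul_inverse_b (hu : IsSymplecticBlocks α J u a b)
    (hu'₁ : Function.LeftInverse u' u) (hx : x ∈ L⁺) :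
    u' (J (u x)) - J x = -(2 * Complex.I) • u' (b x) := by
  have hJu : J (u x) = Complex.I • u x - (2 * Complex.I) • b x := by
    rw [hu.J_apply_of_mem_plus hx, hu.apply_eq x hx]
    module
  rw [hJu, map_sub, map_smul, map_smul, hu'₁ x, mem_ker_sub_smul_one_iff.1 hx]
  module

theorem inverse_J_apply_sub_J_conj (hu : IsSymplecticBlocks α J u a b)
    (hC : IsCompatibleConjugation α J) (hu'₁ : Function.LeftInverse u' u)
    (hu'₂ : Function.RightInverse u' u) (z : E) :
    u' (J (u (α z))) - J (α z) = α (u' (J (u z)) - J z) := by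
  rw [hu.conj, hC.J_conj, hu.inverse_conj hu'₁ hu'₂, hC.J_conj, map_sub]

theorem inverse_J_apply_sub_J_of_mem_plus [CompleteSpace E] (hu : IsSymplecticBlocks α J u a b)
    (hC : IsCompatibleConjugation α J) (hP : IsSplitting J Pp Pm)
    (hu'₁ : Function.LeftInverse u' u) (hu'₂ : Function.RightInverse u' u) (hx : x ∈ L⁺) :
    u' (J (u x)) - J x = (2 * Complex.I) • ((b†) (b x) - α ((b†) (α (a x)))) := by
  rw [hu.inverse_J_apply_sub_J_eq_smul_inverse_b hu'₁ hx, hu.inverse_b_apply hC hP hu'₁ hu'₂ hx]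
  module

theorem inverse_J_apply_sub_J_of_mem_minus [CompleteSpace E] (hu : IsSymplecticBlocks α J u a b)
    (hC : IsCompatibleConjugation α J) (hP : IsSplitting J Pp Pm)
    (hu'₁ : Function.LeftInverse u' u) (hu'₂ : Function.RightInverse u' u) (hy : y ∈ L⁻) :
    u' (J (u y)) - J y = (2 * Complex.I) • ((b†) (α (a (α y))) - α ((b†) (b (α y)))) := by
  rw [← hC.conj_conj y, hu.inverse_J_apply_sub_J_conj hC hu'₁ hu'₂,
    hu.inverse_J_apply_sub_J_of_mem_plus hC hP hu'₁ hu'₂ (hC.conj_mem_plus hy), hC.conj_conj,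
    map_smulₛₗ, map_sub, hC.conj_conj, map_mul, Complex.conj_I, map_ofNat]
  module

theorem isHilbertSchmidt_b_iff [CompleteSpace E] (hu : IsSymplecticBlocks α J u a b)
    (hC : IsCompatibleConjugation α J) (hP : IsSplitting J Pp Pm)
    (hu'₁ : Function.LeftInverse u' u) (hu'₂ : Function.RightInverse u' u) :
    IsHilbertSchmidt b ↔ IsHilbertSchmidt (u'.comp (J.comp u) - J) := by
  set D := u'.comp (J.comp u) - J
  have hDPp : D.comp Pp = -(2 * Complex.I) • u'.comp b := by
    ext z
    show u' (J (u (Pp z))) - J (Pp z) = -(2 * Complex.I) • u' (b z)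
    rw [← hu.b_apply_plus hP z]
    exact hu.inverse_J_apply_sub_J_eq_smul_inverse_b hu'₁ (hP.plus_mem z)
  have hDPm : ∀ z, D.comp Pm z = α (D.comp Pp (α z)) := fun z => by
    show _ = α (u' (J (u (Pp (α z)))) - J (Pp (α z)))
    rw [hP.plus_apply_conj hC, hu.inverse_J_apply_sub_J_conj hC hu'₁ hu'₂, hC.conj_conj]
    rfl
  have hD_split : D = D.comp Pp + D.comp Pm := by
    ext z
    simp only [add_apply, ContinuousLinearMap.comp_apply, ← map_add, hP.add_eq]
  have hb_eq : b = u.comp ((Complex.I / 2) • D.comp Pp) := by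
    ext z
    have hc : Complex.I / 2 * -(2 * Complex.I) = 1 := by linear_combination -Complex.I_mul_I
    simp only [hDPp, smul_smul, hc, one_smul, ContinuousLinearMap.comp_apply]
    exact (hu'₂ (b z)).symm
  constructor
  · intro hb
    have hDPp_hs : IsHilbertSchmidt (D.comp Pp) := hDPp ▸ (hb.clm_comp u').smul _
    rw [hD_split]
    exact hDPp_hs.add (hDPp_hs.of_apply_eq_conj hC.conj_conj hC.inner_conj_conj hDPm)
  · intro hD
    rw [hb_eq]
    exact ((hD.comp_clm Pp).smul _).clm_comp u

end IsSymplecticBlocks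

end Splitting

theorem restricted_symplectic_characterization_general {E : Type} [NormedAddCommGroup E]
    [InnerProductSpace ℂ E] [CompleteSpace E]
    (α : E → E) (J : E →L[ℂ] E)
    (hα_add : ∀ x y, α (x + y) = α x + α y)
    (hα_smul : ∀ (c : ℂ) (x : E), α (c • x) = (starRingEnd ℂ) c • α x)
    (hα_invol : ∀ x, α (α x) = x)
    (hα_inner : ∀ x y, (inner ℂ (α x) (α y) : ℂ) = (inner ℂ y x : ℂ))
    (hJα : ∀ x, J (α x) = α (J x))
    (hJskew : ∀ x y, (inner ℂ (J x) y : ℂ) = - (inner ℂ x (J y) : ℂ))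
    (u u' a b : E →L[ℂ] E)
    (hu_symp : ∀ x y, (inner ℂ (α (u y)) (J (u x)) : ℂ) = (inner ℂ (α y) (J x) : ℂ))
    (hu_α : ∀ x, u (α x) = α (u x))
    (huu' : ∀ x, u' (u x) = x) (hu'u : ∀ x, u (u' x) = x)
    (ha_mem : ∀ x ∈ LinearMap.ker ((J - Complex.I • (1 : E →L[ℂ] E) : E →L[ℂ] E) : E →ₗ[ℂ] E),
      a x ∈ LinearMap.ker ((J - Complex.I • (1 : E →L[ℂ] E) : E →L[ℂ] E) : E →ₗ[ℂ] E))
    (ha_zero : ∀ x ∈ LinearMap.ker ((J + Complex.I • (1 : E →L[ℂ] E) : E →L[ℂ] E) : E →ₗ[ℂ] E), a x = 0)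
    (hb_mem : ∀ x ∈ LinearMap.ker ((J - Complex.I • (1 : E →L[ℂ] E) : E →L[ℂ] E) : E →ₗ[ℂ] E),
      b x ∈ LinearMap.ker ((J + Complex.I • (1 : E →L[ℂ] E) : E →L[ℂ] E) : E →ₗ[ℂ] E))
    (hb_zero : ∀ x ∈ LinearMap.ker ((J + Complex.I • (1 : E →L[ℂ] E) : E →L[ℂ] E) : E →ₗ[ℂ] E), b x = 0)
    (hblock : ∀ x ∈ LinearMap.ker ((J - Complex.I • (1 : E →L[ℂ] E) : E →L[ℂ] E) : E →ₗ[ℂ] E), u x = a x + b x)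
    (Pp Pm : E →L[ℂ] E)
    (hPp_mem : ∀ x, Pp x ∈ LinearMap.ker ((J - Complex.I • (1 : E →L[ℂ] E) : E →L[ℂ] E) : E →ₗ[ℂ] E))
    (hPm_mem : ∀ x, Pm x ∈ LinearMap.ker ((J + Complex.I • (1 : E →L[ℂ] E) : E →L[ℂ] E) : E →ₗ[ℂ] E))
    (hsum : ∀ x, Pp x + Pm x = x) :
    (IsHilbertSchmidt (Pm.comp (u.comp Pp)) ↔ IsHilbertSchmidt b) ∧
    (IsHilbertSchmidt b ↔ IsHilbertSchmidt (u'.comp (J.comp u) - J)) ∧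
    (∀ x ∈ LinearMap.ker ((J - Complex.I • (1 : E →L[ℂ] E) : E →L[ℂ] E) : E →ₗ[ℂ] E),
      u' (J (u x)) - J x = (2 * Complex.I) •
        (ContinuousLinearMap.adjoint b (b x)
          - α (ContinuousLinearMap.adjoint b (α (a x))))) ∧
    (∀ y ∈ LinearMap.ker ((J + Complex.I • (1 : E →L[ℂ] E) : E →L[ℂ] E) : E →ₗ[ℂ] E),
      u' (J (u y)) - J y = (2 * Complex.I) •
        (ContinuousLinearMap.adjoint b (α (a (α y)))
          - α (ContinuousLinearMap.adjoint b (b (α y))))) := by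
  let σ : E →ₗ⋆[ℂ] E := ⟨⟨α, hα_add⟩, hα_smul⟩
  have hC : IsCompatibleConjugation σ J := ⟨hα_invol, hα_inner, hJα, hJskew⟩
  have hP : IsSplitting J Pp Pm := ⟨hPp_mem, hPm_mem, hsum⟩
  have hu : IsSymplecticBlocks σ J u a b :=
    ⟨hu_symp, hu_α, ha_mem, ha_zero, hb_mem, hb_zero, hblock⟩
  exact ⟨by rw [hu.minus_comp_comp_plus hP], hu.isHilbertSchmidt_b_iff hC hP huu' hu'u,
    fun x hx => hu.inverse_J_apply_sub_J_of_mem_plus hC hP huu' hu'u hx,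
    fun y hy => hu.inverse_J_apply_sub_J_of_mem_minus hC hP huu' hu'u hy⟩

/-- For u ∈ Sp(H) with block form [[a, αbα],[b, αaα]]: the restriction to L⁺ of the projection
onto L⁻ along u(L⁺) ⊕ u(L⁻) is Hilbert–Schmidt iff b is Hilbert–Schmidt iff u⁻¹Ju - J is
Hilbert–Schmidt; moreover u⁻¹Ju - J = 2i[[b*b, b*αaα],[-αb*αa, -αb*bα]]. -/
theorem restricted_symplectic_characterization {E : Type} [NormedAddCommGroup E]
    [InnerProductSpace ℂ E] [CompleteSpace E]
    (α : E → E) (J : E →L[ℂ] E)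
    (hα_add : ∀ x y, α (x + y) = α x + α y)
    (hα_smul : ∀ (c : ℂ) (x : E), α (c • x) = (starRingEnd ℂ) c • α x)
    (hα_invol : ∀ x, α (α x) = x)
    (hα_inner : ∀ x y, (inner ℂ (α x) (α y) : ℂ) = (inner ℂ y x : ℂ))
    (hJJ : ∀ x, J (J x) = -x)
    (hJα : ∀ x, J (α x) = α (J x))
    (hJskew : ∀ x y, (inner ℂ (J x) y : ℂ) = - (inner ℂ x (J y) : ℂ))
    (u u' a b : E →L[ℂ] E)
    (hu_symp : ∀ x y, (inner ℂ (α (u y)) (J (u x)) : ℂ) = (inner ℂ (α y) (J x) : ℂ))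
    (hu_α : ∀ x, u (α x) = α (u x))
    (huu' : ∀ x, u' (u x) = x) (hu'u : ∀ x, u (u' x) = x)
    (ha_mem : ∀ x ∈ LinearMap.ker ((J - Complex.I • (1 : E →L[ℂ] E) : E →L[ℂ] E) : E →ₗ[ℂ] E),
      a x ∈ LinearMap.ker ((J - Complex.I • (1 : E →L[ℂ] E) : E →L[ℂ] E) : E →ₗ[ℂ] E))
    (ha_zero : ∀ x ∈ LinearMap.ker ((J + Complex.I • (1 : E →L[ℂ] E) : E →L[ℂ] E) : E →ₗ[ℂ] E), a x = 0)
    (hb_mem : ∀ x ∈ LinearMap.ker ((J - Complex.I • (1 : E →L[ℂ] E) : E →L[ℂ] E) : E →ₗ[ℂ] E),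
      b x ∈ LinearMap.ker ((J + Complex.I • (1 : E →L[ℂ] E) : E →L[ℂ] E) : E →ₗ[ℂ] E))
    (hb_zero : ∀ x ∈ LinearMap.ker ((J + Complex.I • (1 : E →L[ℂ] E) : E →L[ℂ] E) : E →ₗ[ℂ] E), b x = 0)
    (hblock : ∀ x ∈ LinearMap.ker ((J - Complex.I • (1 : E →L[ℂ] E) : E →L[ℂ] E) : E →ₗ[ℂ] E), u x = a x + b x)
    (Pp Pm : E →L[ℂ] E)
    (hPp_mem : ∀ x, Pp x ∈ LinearMap.ker ((J - Complex.I • (1 : E →L[ℂ] E) : E →L[ℂ] E) : E →ₗ[ℂ] E))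
    (hPm_mem : ∀ x, Pm x ∈ LinearMap.ker ((J + Complex.I • (1 : E →L[ℂ] E) : E →L[ℂ] E) : E →ₗ[ℂ] E))
    (hsum : ∀ x, Pp x + Pm x = x)
    (hPp_id : ∀ x ∈ LinearMap.ker ((J - Complex.I • (1 : E →L[ℂ] E) : E →L[ℂ] E) : E →ₗ[ℂ] E), Pp x = x)
    (hPm_id : ∀ x ∈ LinearMap.ker ((J + Complex.I • (1 : E →L[ℂ] E) : E →L[ℂ] E) : E →ₗ[ℂ] E), Pm x = x) :
    (IsHilbertSchmidt (Pm.comp (u.comp Pp)) ↔ IsHilbertSchmidt b) ∧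
    (IsHilbertSchmidt b ↔ IsHilbertSchmidt (u'.comp (J.comp u) - J)) ∧
    (∀ x ∈ LinearMap.ker ((J - Complex.I • (1 : E →L[ℂ] E) : E →L[ℂ] E) : E →ₗ[ℂ] E),
      u' (J (u x)) - J x = (2 * Complex.I) •
        (ContinuousLinearMap.adjoint b (b x)
          - α (ContinuousLinearMap.adjoint b (α (a x))))) ∧
    (∀ y ∈ LinearMap.ker ((J + Complex.I • (1 : E →L[ℂ] E) : E →L[ℂ] E) : E →ₗ[ℂ] E),
      u' (J (u y)) - J y = (2 * Complex.I) •
        (ContinuousLinearMap.adjoint b (α (a (α y)))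
          - α (ContinuousLinearMap.adjoint b (b (α y))))) :=
  restricted_symplectic_characterization_general α J hα_add hα_smul hα_invol hα_inner hJα hJskew u
    u' a b hu_symp hu_α huu' hu'u ha_mem ha_zero hb_mem hb_zero hblock Pp Pm hPp_mem hPm_mem hsum
end
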